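/- arXiv:2210.15624 — 10 statements merged into one kernel-verified Lean document; each statement's English description precedes it below -/
import Mathlib

section
/- Let p ∈ (0,1), c ∈ (0,1], and define f(α) := α² p^{2α}/(c + (1−c) p^{α}) and g(α) := f(α)/α for positive integers α. Let α_B be the smallest positive integer maximizing g over the positive integers. If N_q is a positive integer with N_q ≤ α_B, then for every finite list of positive integers α'_1, …, α'_{M'} with α'_1 + ⋯ + α'_{M'} = N_q, one has Σ_{k=1}^{M'} f(α'_k) ≤ N_q² p^{2 N_q}/(c + (1−c) p^{N_q}) = f(N_q); moreover equality is attained by the trivial partition M' = 1, α'_1 = N_q. -/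
/-!
The per-query information `g(α) = α p^{2α} / (c + (1 - c) p^α)` is a log-concave sequence: `α` is
log-concave, `p^{2α}` is geometric, and the denominator is log-convex, being a constant plus a
geometric sequence. A positive log-concave sequence that decreases once keeps decreasing, so it
is nondecreasing up to any of its maximizers; hence `g(a) ≤ g(N_q)` for every part `a ≤ N_q ≤ α_B`
of a partition of `N_q`, and `Σ f(a) = Σ a g(a) ≤ N_q g(N_q) = f(N_q)`.
-/

open Set

def LogConcaveSeq (u : ℕ → ℝ) : Prop :=
  ∀ n, u n * u (n + 2) ≤ u (n + 1) ^ 2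

namespace LogConcaveSeq

variable {u v : ℕ → ℝ}

theorem mul (hv₀ : ∀ n, 0 ≤ v n) (hu : LogConcaveSeq u)
    (hv : LogConcaveSeq v) : LogConcaveSeq (fun n ↦ u n * v n) := fun n ↦
  calc u n * v n * (u (n + 2) * v (n + 2)) = u n * u (n + 2) * (v n * v (n + 2)) := by ring
    _ ≤ u (n + 1) ^ 2 * v (n + 1) ^ 2 :=
      mul_le_mul (hu n) (hv n) (mul_nonneg (hv₀ _) (hv₀ _)) (sq_nonneg _)
    _ = (u (n + 1) * v (n + 1)) ^ 2 := by ring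

theorem natCast : LogConcaveSeq (fun n ↦ (n : ℝ)) := fun n ↦ by
  push_cast
  nlinarith

theorem pow (a : ℝ) : LogConcaveSeq (fun n ↦ a ^ n) := fun n ↦ le_of_eq (by ring)

theorem inv_const_add_mul_pow {b c p : ℝ} (hb : 0 ≤ b) (hc : 0 < c) (hp : 0 ≤ p) :
    LogConcaveSeq (fun n ↦ (c + b * p ^ n)⁻¹) := fun n ↦ by
  have hconvex : (c + b * p ^ (n + 1)) ^ 2 ≤ (c + b * p ^ n) * (c + b * p ^ (n + 2)) := by
    have : (c + b * p ^ n) * (c + b * p ^ (n + 2)) - (c + b * p ^ (n + 1)) ^ 2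
        = c * b * p ^ n * (1 - p) ^ 2 := by ring
    nlinarith [show 0 ≤ c * b * p ^ n * (1 - p) ^ 2 by positivity]
  rw [← mul_inv, inv_pow]
  exact inv_anti₀ (by positivity) hconvex

variable (hpos : ∀ n, 0 < u n) (hlc : LogConcaveSeq u)
include hpos hlc

theorem succ_succ_lt_of_succ_lt {n : ℕ} (h : u (n + 1) < u n) : u (n + 2) < u (n + 1) := by
  refine lt_of_mul_lt_mul_left ?_ (hpos n).le
  calc u n * u (n + 2) ≤ u (n + 1) * u (n + 1) := (hlc n).trans_eq (sq _)
    _ < u n * u (n + 1) := mul_lt_mul_of_pos_right h (hpos _)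

theorem strictAnti_of_succ_lt {a : ℕ} (h : u (a + 1) < u a) :
    StrictAnti (fun k ↦ u (a + k)) := by
  refine strictAnti_nat_of_succ_lt fun k ↦ ?_
  induction k with
  | zero => simpa using h
  | succ k ih => exact hlc.succ_succ_lt_of_succ_lt hpos ih

theorem monotoneOn_Iic {m : ℕ} (hm : ∀ n, u n ≤ u m) : MonotoneOn u (Iic m) := by
  refine monotoneOn_of_le_succ ordConnected_Iic fun a _ _ ha ↦ ?_
  rw [Order.succ_eq_add_one, mem_Iic] at ha
  by_contra! h
  have hdrop := hlc.strictAnti_of_succ_lt hpos h (show 0 < m - a by omega)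
  simp only [add_zero, Nat.add_sub_cancel' (show a ≤ m by omega)] at hdrop
  exact (hm a).not_gt hdrop

end LogConcaveSeq

noncomputable def qfiPerQuery (b c p : ℝ) (α : ℕ) : ℝ :=
  α * p ^ (2 * α) / (c + b * p ^ α)

section qfiPerQuery

variable {b c p : ℝ} (hb : 0 ≤ b) (hc : 0 < c)
include hb hc

theorem qfiPerQuery_pos (hp : 0 < p) {α : ℕ} (hα : α ≠ 0) : 0 < qfiPerQuery b c p α := by
  unfold qfiPerQuery
  have : (0 : ℝ) < α := by positivity
  positivity

theorem logConcaveSeq_qfiPerQuery (hp : 0 ≤ p) : LogConcaveSeq (qfiPerQuery b c p) := by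
  have hfactor : qfiPerQuery b c p = fun n : ℕ ↦ (n : ℝ) * (p ^ 2) ^ n * (c + b * p ^ n)⁻¹ := by
    funext n
    rw [qfiPerQuery, ← pow_mul, div_eq_mul_inv]
  rw [hfactor]
  refine .mul (fun n ↦ by positivity) (.mul (fun n ↦ by positivity) .natCast (.pow _))
    (.inv_const_add_mul_pow hb hc hp)

theorem monotoneOn_qfiPerQuery_Icc (hp : 0 < p) {m : ℕ}
    (hm : ∀ α, 1 ≤ α → qfiPerQuery b c p α ≤ qfiPerQuery b c p m) :
    MonotoneOn (qfiPerQuery b c p) (Icc 1 m) := by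
  rintro a ⟨ha, -⟩ a' ⟨ha', ha'm⟩ haa'
  obtain ⟨m, rfl⟩ : ∃ k, m = k + 1 := ⟨m - 1, by omega⟩
  have hmono : MonotoneOn (fun n ↦ qfiPerQuery b c p (n + 1)) (Iic m) :=
    LogConcaveSeq.monotoneOn_Iic (fun n ↦ qfiPerQuery_pos hb hc hp n.succ_ne_zero)
      (fun n ↦ logConcaveSeq_qfiPerQuery hb hc hp.le (n + 1)) fun n ↦ hm (n + 1) (by omega)
  have := hmono (a := a - 1) (b := a' - 1) (mem_Iic.mpr (by omega)) (mem_Iic.mpr (by omega)) (by omega)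
  simpa only [Nat.sub_add_cancel ha, Nat.sub_add_cancel ha'] using this

end qfiPerQuery

theorem List.sum_map_le_sum_mul {f : ℕ → ℝ} {G : ℝ} (L : List ℕ) (h : ∀ a ∈ L, f a ≤ a * G) :
    (L.map f).sum ≤ L.sum * G := by
  calc (L.map f).sum ≤ (L.map fun a : ℕ ↦ (a : ℝ) * G).sum := List.sum_le_sum h
    _ = L.sum * G := by rw [List.sum_map_mul_right, Nat.cast_list_sum]

theorem stmt_0_general (p c : ℝ) (hp : p ∈ Set.Ioo (0 : ℝ) 1) (hc : c ∈ Set.Ioc (0 : ℝ) 1)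
    (f g : ℕ → ℝ)
    (hf : ∀ α : ℕ, f α = (α : ℝ) ^ 2 * p ^ (2 * α) / (c + (1 - c) * p ^ α))
    (hg : ∀ α : ℕ, g α = f α / (α : ℝ))
    (αB : ℕ)
    (hmax : ∀ α : ℕ, 1 ≤ α → g α ≤ g αB)
    (Nq : ℕ) (hNqle : Nq ≤ αB) :
    (∀ L : List ℕ, (∀ a ∈ L, 1 ≤ a) → L.sum = Nq →
      (L.map f).sum ≤ (Nq : ℝ) ^ 2 * p ^ (2 * Nq) / (c + (1 - c) * p ^ Nq)) ∧
    f Nq = (Nq : ℝ) ^ 2 * p ^ (2 * Nq) / (c + (1 - c) * p ^ Nq) ∧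
    ([Nq].map f).sum = (Nq : ℝ) ^ 2 * p ^ (2 * Nq) / (c + (1 - c) * p ^ Nq) := by
  have hb : 0 ≤ 1 - c := sub_nonneg.mpr hc.2
  have hgq : g = qfiPerQuery (1 - c) c p := funext fun α ↦ by
    rcases eq_or_ne α 0 with rfl | hα
    · simp [hg, qfiPerQuery]
    · rw [hg, hf, qfiPerQuery]
      field_simp
  have hfg : ∀ α : ℕ, f α = α * g α := fun α ↦ by
    rcases eq_or_ne α 0 with rfl | hα
    · simp [hf]
    · rw [hg]
      field_simp
  subst hgq
  refine ⟨fun L hL hsum ↦ ?_, hf Nq, by simp [hf Nq]⟩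
  calc (L.map f).sum ≤ L.sum * qfiPerQuery (1 - c) c p Nq := L.sum_map_le_sum_mul fun a ha ↦ by
        rw [hfg]
        gcongr
        have haNq : a ≤ Nq := hsum ▸ List.le_sum_of_mem ha
        exact monotoneOn_qfiPerQuery_Icc hb hc.1 hp.1 hmax ⟨hL a ha, haNq.trans hNqle⟩
          ⟨(hL a ha).trans haNq, hNqle⟩ haNq
    _ = f Nq := by rw [hsum, hfg]
    _ = _ := hf Nq

/-- Theorem 1 (precision limit), case `N_q ≤ α_B`: for any partition of the total
query number `N_q` into positive integers, the total quantum Fisher information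
`Σ f(α'_k)` is bounded by `f(N_q) = N_q² p^{2N_q}/(c + (1-c) p^{N_q})`, and the
trivial partition attains equality. -/
theorem stmt_0 (p c : ℝ) (hp : p ∈ Set.Ioo (0 : ℝ) 1) (hc : c ∈ Set.Ioc (0 : ℝ) 1)
    (f g : ℕ → ℝ)
    (hf : ∀ α : ℕ, f α = (α : ℝ) ^ 2 * p ^ (2 * α) / (c + (1 - c) * p ^ α))
    (hg : ∀ α : ℕ, g α = f α / (α : ℝ))
    (αB : ℕ) (hαB : 1 ≤ αB)
    (hmax : ∀ α : ℕ, 1 ≤ α → g α ≤ g αB)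
    (hleast : ∀ β : ℕ, 1 ≤ β → β < αB → g β < g αB)
    (Nq : ℕ) (hNq : 1 ≤ Nq) (hNqle : Nq ≤ αB) :
    (∀ L : List ℕ, (∀ a ∈ L, 1 ≤ a) → L.sum = Nq →
      (L.map f).sum ≤ (Nq : ℝ) ^ 2 * p ^ (2 * Nq) / (c + (1 - c) * p ^ Nq)) ∧
    f Nq = (Nq : ℝ) ^ 2 * p ^ (2 * Nq) / (c + (1 - c) * p ^ Nq) ∧
    ([Nq].map f).sum = (Nq : ℝ) ^ 2 * p ^ (2 * Nq) / (c + (1 - c) * p ^ Nq) :=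
  stmt_0_general p c hp hc f g hf hg αB hmax Nq hNqle
end

section
/- Let p ∈ (0,1), c ∈ (0,1], and define f(α) := α² p^{2α}/(c + (1−c) p^{α}) and g(α) := f(α)/α for positive integers α. Let α_B be the smallest positive integer maximizing g over the positive integers. If N_q is a positive integer with N_q > α_B, then for every finite list of positive integers α'_1, …, α'_{M'} with α'_1 + ⋯ + α'_{M'} = N_q, one has Σ_{k=1}^{M'} f(α'_k) ≤ N_q · α_B p^{2 α_B}/(c + (1−c) p^{α_B}) = N_q g(α_B). Moreover, if N_q = r α_B for some positive integer r, the partition with M' = r and α'_k = α_B for all k attains equality. -/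
/-- Theorem 1 (precision limit), case `N_q > α_B`: for any partition of the total
query number `N_q` into positive integers, the total quantum Fisher information
`Σ f(α'_k)` is bounded by `N_q · g(α_B) = N_q α_B p^{2α_B}/(c + (1-c) p^{α_B})`;
if `N_q = r α_B`, the partition into `r` copies of `α_B` attains equality. -/
theorem stmt_1 (p c : ℝ) (hp : p ∈ Set.Ioo (0 : ℝ) 1) (hc : c ∈ Set.Ioc (0 : ℝ) 1)
    (f g : ℕ → ℝ)
    (hf : ∀ α : ℕ, f α = (α : ℝ) ^ 2 * p ^ (2 * α) / (c + (1 - c) * p ^ α))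
    (hg : ∀ α : ℕ, g α = f α / (α : ℝ))
    (αB : ℕ) (hαB : 1 ≤ αB)
    (hmax : ∀ α : ℕ, 1 ≤ α → g α ≤ g αB)
    (hleast : ∀ β : ℕ, 1 ≤ β → β < αB → g β < g αB)
    (Nq : ℕ) (hNq : 1 ≤ Nq) (hNqgt : αB < Nq) :
    (∀ L : List ℕ, (∀ a ∈ L, 1 ≤ a) → L.sum = Nq →
      (L.map f).sum ≤ (Nq : ℝ) * ((αB : ℝ) * p ^ (2 * αB) / (c + (1 - c) * p ^ αB))) ∧
    (∀ r : ℕ, 1 ≤ r → Nq = r * αB →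
      ((List.replicate r αB).map f).sum
        = (Nq : ℝ) * ((αB : ℝ) * p ^ (2 * αB) / (c + (1 - c) * p ^ αB))) := by
  obtain ⟨hp0, hp1⟩ := hp
  obtain ⟨hc0, hc1⟩ := hc
  have hden : ∀ α : ℕ, 0 < c + (1 - c) * p ^ α := by
    intro α
    have h1 : 0 ≤ (1 - c) * p ^ α :=
      mul_nonneg (by linarith) (le_of_lt (pow_pos hp0 α))
    linarith
  have hαB0 : (0 : ℝ) < (αB : ℝ) := by exact_mod_cast hαB
  have hgB : g αB = (αB : ℝ) * p ^ (2 * αB) / (c + (1 - c) * p ^ αB) := by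
    have hne : (αB : ℝ) ≠ 0 := hαB0.ne'
    rw [hg, hf, div_div, sq, mul_assoc, mul_comm (c + (1 - c) * p ^ αB),
      mul_div_mul_left _ _ hne]
  have hgB0 : 0 ≤ g αB := by
    rw [hgB]
    exact div_nonneg (mul_nonneg hαB0.le (pow_pos hp0 _).le) (hden αB).le
  have hfa : ∀ a : ℕ, f a = (a : ℝ) * g a := by
    intro a
    rcases Nat.eq_zero_or_pos a with h | h
    · subst h; simp [hf]
    · have ha : (a : ℝ) ≠ 0 := by positivity
      rw [hg]; field_simp
  have key : ∀ L : List ℕ, (∀ a ∈ L, 1 ≤ a) →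
      (L.map f).sum ≤ (L.sum : ℝ) * g αB := by
    intro L
    induction L with
    | nil => simp
    | cons a t ih =>
      intro hmem
      have ha : 1 ≤ a := hmem a (by simp)
      have ht := ih (fun b hb => hmem b (by simp [hb]))
      have hfa' : f a ≤ (a : ℝ) * g αB := by
        rw [hfa a]
        exact mul_le_mul_of_nonneg_left (hmax a ha) (by positivity)
      simp only [List.map_cons, List.sum_cons, Nat.cast_add, add_mul]
      linarith
  constructor
  · intro L hL hsum
    have := key L hL
    rw [hsum] at this
    rw [← hgB]
    exact this
  · intro r hr hNqeq
    have : ((List.replicate r αB).map f).sum = (r : ℝ) * f αB := by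
      rw [List.map_replicate, List.sum_replicate, nsmul_eq_mul]
    rw [this, hfa αB, hNqeq, ← hgB]
    push_cast
    ring
end

section
/- Let p ∈ (0,1) and c ∈ (0,1], define g(α) := α p^{2α}/(c + (1−c) p^{α}) for α > 0, and let α_B be the smallest positive integer maximizing g over the positive integers. Then g restricted to positive integers is monotone nondecreasing up to α_B: for all positive integers α ≤ β ≤ α_B, g(α) ≤ g(β). -/
/-- Monotonicity of `g(α) = α p^{2α}/(c + (1-c) p^α)` on positive integers up to its
smallest positive-integer maximizer `α_B`. -/
theorem stmt_3 (p c : ℝ) (hp : p ∈ Set.Ioo (0 : ℝ) 1) (hc : c ∈ Set.Ioc (0 : ℝ) 1)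
    (g : ℕ → ℝ)
    (hg : ∀ α : ℕ, g α = (α : ℝ) * p ^ (2 * α) / (c + (1 - c) * p ^ α))
    (αB : ℕ) (hαB : 1 ≤ αB)
    (hmax : ∀ α : ℕ, 1 ≤ α → g α ≤ g αB)
    (hleast : ∀ β : ℕ, 1 ≤ β → β < αB → g β < g αB) :
    ∀ α β : ℕ, 1 ≤ α → α ≤ β → β ≤ αB → g α ≤ g β := by
  obtain ⟨hp0, hp1⟩ := hp
  obtain ⟨hc0, hc1⟩ := hc
  have hb : (0:ℝ) ≤ 1 - c := by linarith
  have hD : ∀ n : ℕ, 0 < c + (1 - c) * p ^ n := by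
    intro n
    have ht := pow_pos hp0 n
    nlinarith [mul_nonneg hb ht.le]
  have hgpos : ∀ n : ℕ, 1 ≤ n → 0 < g n := by
    intro n hn
    rw [hg]
    apply div_pos _ (hD n)
    have : (0:ℝ) < (n:ℝ) := by exact_mod_cast hn
    positivity
  -- log concavity
  have key : ∀ n : ℕ, g n * g (n+2) ≤ g (n+1) * g (n+1) := by
    intro n
    rw [hg, hg, hg]
    rw [div_mul_div_comm, div_mul_div_comm,
      div_le_div_iff₀ (mul_pos (hD n) (hD (n+2))) (mul_pos (hD (n+1)) (hD (n+1)))]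
    have ht : 0 < p ^ n := pow_pos hp0 n
    have e1 : p ^ (n+1) = p ^ n * p := pow_succ p n
    have e2 : p ^ (n+2) = p ^ n * p ^ 2 := by ring
    have e3 : p ^ (2*(n+1)) = p ^ (2*n) * p ^ 2 := by ring
    have e4 : p ^ (2*(n+2)) = p ^ (2*n) * p ^ 4 := by ring
    have ineq2 : (c + (1-c) * p ^ (n+1)) * (c + (1-c) * p ^ (n+1))
        ≤ (c + (1-c) * p ^ n) * (c + (1-c) * p ^ (n+2)) := by
      rw [e1, e2]
      nlinarith [mul_nonneg (mul_nonneg (mul_nonneg hb hc0.le) ht.le) (sq_nonneg (1-p))]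
    have ineq1 : ((n:ℝ) * ((n:ℕ)+2 : ℕ)) ≤ (((n:ℕ)+1 : ℕ) : ℝ) * (((n:ℕ)+1 : ℕ) : ℝ) := by
      push_cast; nlinarith
    have hP : (0:ℝ) ≤ p ^ (2*n) * p ^ 2 * (p ^ (2*n) * p ^ 2) := by positivity
    have hA : (0:ℝ) ≤ (n:ℝ) * ((n:ℕ)+2 : ℕ) := by positivity
    have hB : (0:ℝ) ≤ (c + (1-c) * p ^ (n+1)) * (c + (1-c) * p ^ (n+1)) :=
      (mul_pos (hD (n+1)) (hD (n+1))).le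
    calc (n:ℝ) * p ^ (2*n) * ((((n:ℕ)+2:ℕ):ℝ) * p ^ (2*(n+2)))
          * ((c + (1-c) * p ^ (n+1)) * (c + (1-c) * p ^ (n+1)))
        = ((n:ℝ) * (((n:ℕ)+2:ℕ):ℝ)) * (p ^ (2*n) * p ^ 2 * (p ^ (2*n) * p ^ 2))
          * ((c + (1-c) * p ^ (n+1)) * (c + (1-c) * p ^ (n+1))) := by
          rw [e4]; ring
      _ ≤ ((((n:ℕ)+1:ℕ):ℝ) * (((n:ℕ)+1:ℕ):ℝ)) * (p ^ (2*n) * p ^ 2 * (p ^ (2*n) * p ^ 2))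
          * ((c + (1-c) * p ^ n) * (c + (1-c) * p ^ (n+2))) := by
          apply mul_le_mul (mul_le_mul_of_nonneg_right ineq1 hP) ineq2 hB
          positivity
      _ = (((n:ℕ)+1:ℕ):ℝ) * p ^ (2*(n+1)) * ((((n:ℕ)+1:ℕ):ℝ) * p ^ (2*(n+1)))
          * ((c + (1-c) * p ^ n) * (c + (1-c) * p ^ (n+2))) := by
          rw [e3]; ring
  -- once decreasing, always decreasing
  have dec : ∀ n : ℕ, 1 ≤ n → g (n+1) < g n → ∀ m : ℕ, n ≤ m → g (m+1) < g m := by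
    intro n hn hlt
    intro m hm
    induction m, hm using Nat.le_induction with
    | base => exact hlt
    | succ m hm ih =>
      have h1 := key m
      have hgm := hgpos m (hn.trans hm)
      have hgm1 := hgpos (m+1) (by omega)
      -- g(m+2) * g m ≤ g(m+1)^2 < g m * g(m+1)
      have h2 : g (m+1) * g (m+1) < g m * g (m+1) :=
        mul_lt_mul_of_pos_right ih hgm1
      have h3 : g m * g (m+2) < g m * g (m+1) := lt_of_le_of_lt h1 h2
      exact lt_of_mul_lt_mul_left h3 hgm.le
  -- stepwise monotone below αB
  have mono1 : ∀ a : ℕ, 1 ≤ a → a < αB → g a ≤ g (a+1) := by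
    intro a ha haB
    by_contra h
    push_neg at h
    have hdec := dec a ha h
    have hle : ∀ m : ℕ, a+1 ≤ m → g m ≤ g (a+1) := by
      intro m hm
      induction m, hm using Nat.le_induction with
      | base => exact le_refl _
      | succ m hm ih => exact le_trans (hdec m (by omega)).le ih
    have h2 := hle αB haB
    have h3 := hleast a ha haB
    linarith
  intro α β hα hab hbB
  induction β, hab using Nat.le_induction with
  | base => exact le_refl _
  | succ β hβ ih =>
    have h1 := ih (by omega)
    have h2 := mono1 β (hα.trans hβ) (by omega)
    linarith
end

section
/- Let p ∈ (0,1), let d ≥ 2 be a real number, let m be a natural number, set η := p^{2m+2}, and let θ be a real number with cos((m+1)θ) ≠ 0. Define P := (d−1)/d + η(sin²((m+1)θ) − (d−1)/d), I_c := (2m+2)² η² sin²((2m+2)θ)/(4 P (1−P)), I_q := d (2m+2)² η²/(d η + 2(1−η)), ε := [(1−η)/(d η cos²((m+1)θ))] · (1 − (1−η)/d − 2 η cos²((m+1)θ)), and κ := sin²((m+1)θ)/(1 − η cos²((m+1)θ) + ε). Then the identity I_c = κ · I_q · (1 + 2(1−η)/(d η)) holds. -/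
set_option maxHeartbeats 1000000 in
/-- Theorem 2 (optimality of the marginalized POVM), the exact identity
`I_c = κ · I_q · (1 + 2(1-η)/(dη))` relating the classical Fisher information of
the two-valued "even" POVM to the quantum Fisher information of the depolarized
amplitude-amplified state. -/
theorem stmt_4 (p d θ : ℝ) (m : ℕ) (hp : p ∈ Set.Ioo (0 : ℝ) 1) (hd : 2 ≤ d)
    (η P Ic Iq ε κ : ℝ)
    (hη : η = p ^ (2 * m + 2))
    (hcos : Real.cos (((m : ℝ) + 1) * θ) ≠ 0)
    (hP : P = (d - 1) / d + η * (Real.sin (((m : ℝ) + 1) * θ) ^ 2 - (d - 1) / d))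
    (hIc : Ic = (2 * (m : ℝ) + 2) ^ 2 * η ^ 2 * Real.sin ((2 * (m : ℝ) + 2) * θ) ^ 2
        / (4 * P * (1 - P)))
    (hIq : Iq = d * (2 * (m : ℝ) + 2) ^ 2 * η ^ 2 / (d * η + 2 * (1 - η)))
    (hε : ε = (1 - η) / (d * η * Real.cos (((m : ℝ) + 1) * θ) ^ 2)
        * (1 - (1 - η) / d - 2 * η * Real.cos (((m : ℝ) + 1) * θ) ^ 2))
    (hκ : κ = Real.sin (((m : ℝ) + 1) * θ) ^ 2
        / (1 - η * Real.cos (((m : ℝ) + 1) * θ) ^ 2 + ε)) :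
    Ic = κ * Iq * (1 + 2 * (1 - η) / (d * η)) := by
  obtain ⟨hp0, hp1⟩ := hp
  set c := Real.cos (((m : ℝ) + 1) * θ) with hc
  have hη0 : 0 < η := by rw [hη]; positivity
  have hη1 : η < 1 := by rw [hη]; exact pow_lt_one₀ hp0.le hp1 (by omega)
  have hd0 : (0 : ℝ) < d := by linarith
  have hc2 : 0 < c ^ 2 := by positivity
  have hc2le : c ^ 2 ≤ 1 := by
    have := Real.neg_one_le_cos (((m : ℝ) + 1) * θ)
    have := Real.cos_le_one (((m : ℝ) + 1) * θ)
    nlinarith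
  have hs2 : Real.sin (((m : ℝ) + 1) * θ) ^ 2 = 1 - c ^ 2 := by
    have := Real.sin_sq_add_cos_sq (((m : ℝ) + 1) * θ)
    linarith
  have hsq : Real.sin ((2 * (m : ℝ) + 2) * θ) ^ 2 = 4 * (1 - c ^ 2) * c ^ 2 := by
    have h2 : (2 * (m : ℝ) + 2) * θ = 2 * (((m : ℝ) + 1) * θ) := by ring
    rw [h2, Real.sin_two_mul]
    nlinarith [hs2]
  have hP' : P = 1 - (1 - η) / d - η * c ^ 2 := by
    rw [hP, hs2]; field_simp; ring
  have hPpos : 0 < P := by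
    rw [hP']
    have h1 : (1 - η) / d ≤ (1 - η) / 2 :=
      div_le_div_of_nonneg_left (by linarith) (by norm_num) hd
    have h2 : η * c ^ 2 ≤ η := by nlinarith
    linarith
  have h1Ppos : 0 < 1 - P := by
    rw [hP']
    have h1 : 0 < (1 - η) / d := div_pos (by linarith) hd0
    have h2 : 0 < η * c ^ 2 := by positivity
    linarith
  have hPne : P ≠ 0 := ne_of_gt hPpos
  have h1Pne : (1 : ℝ) - P ≠ 0 := ne_of_gt h1Ppos
  have hdne : d ≠ 0 := ne_of_gt hd0
  have hηne : η ≠ 0 := ne_of_gt hη0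
  have hdenom : d * η + 2 * (1 - η) ≠ 0 := by linarith [mul_pos hd0 hη0]
  have hε' : η * c ^ 2 * ε = (1 - η) / d * (1 - (1 - η) / d - 2 * η * c ^ 2) := by
    rw [hε]
    field_simp
  -- key identity: η c² (1 - η c² + ε) = P (1 - P)
  have hkey : η * c ^ 2 * (1 - η * c ^ 2 + ε) = P * (1 - P) := by
    rw [hP']
    linear_combination hε'
  have hκden : 1 - η * c ^ 2 + ε ≠ 0 := by
    intro h
    rw [h, mul_zero] at hkey
    exact (mul_pos hPpos h1Ppos).ne (by linarith)
  have hIqfac : Iq * (1 + 2 * (1 - η) / (d * η)) = (2 * (m : ℝ) + 2) ^ 2 * η := by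
    rw [hIq]
    field_simp [hdenom]
  have h4 : 4 * P * (1 - P) = 4 * (η * c ^ 2 * (1 - η * c ^ 2 + ε)) := by
    rw [hkey]; ring
  rw [mul_assoc, hIqfac, hIc, hsq, hκ, hs2, h4]
  rw [div_mul_eq_mul_div, div_eq_div_iff (by positivity) hκden]
  ring
end

section
/- Let p ∈ (0,1) and let θ be a real number such that θ/(2π) is irrational. For a natural number m, define κ_∞(m) := sin²((m+1)θ)/(1 − p^{2m+2} cos²((m+1)θ)). Then κ_∞(m) ∈ [0,1) for every m, and for every ε > 0 there exists a natural number m such that 1 − κ_∞(m) < ε; in fact, 1 − κ_∞(m) = (1 − p^{2m+2}) cos²((m+1)θ)/(1 − p^{2m+2} cos²((m+1)θ)) ≤ cos²((m+1)θ), and m can be chosen so that |cos((m+1)θ)| is arbitrarily small. -/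
open Real

private lemma irr_theta_cos_small {θ : ℝ} (hirr : Irrational (θ / (2 * Real.pi)))
    {ε : ℝ} (hε : 0 < ε) : ∃ m : ℕ, |Real.cos (((m : ℝ) + 1) * θ)| < ε := by
  set ε' : ℝ := min ε 1 with hε'
  have hε'0 : 0 < ε' := lt_min hε one_pos
  have hε'1 : ε' ≤ 1 := min_le_right _ _
  -- the subgroup generated by θ and 2π is dense
  set S : AddSubgroup ℝ := AddSubgroup.closure {θ, 2 * Real.pi} with hS
  have hdense : Dense (S : Set ℝ) := by
    rcases S.dense_or_cyclic with h | ⟨a, ha⟩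
    · exact h
    · exfalso
      have hθ : θ ∈ S := AddSubgroup.subset_closure (by simp)
      have h2π : (2 * Real.pi) ∈ S := AddSubgroup.subset_closure (by simp)
      rw [ha, AddSubgroup.mem_closure_singleton] at hθ h2π
      obtain ⟨m, hm⟩ := hθ
      obtain ⟨n, hn⟩ := h2π
      have h2πne : (2 * Real.pi) ≠ 0 := by positivity
      have hn0 : (n : ℝ) ≠ 0 := by
        rintro h
        apply h2πne
        rw [← hn, zsmul_eq_mul, h, zero_mul]
      apply hirr
      refine ⟨(m : ℚ) / (n : ℚ), ?_⟩
      have ha0 : θ * n = m * (2 * Real.pi) := by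
        rw [← hm, ← hn, zsmul_eq_mul, zsmul_eq_mul]; ring
      push_cast
      field_simp
      linarith [ha0]
  -- find a point of S near π/2
  obtain ⟨s, hsS, hs⟩ : ∃ s ∈ (S : Set ℝ), dist (Real.pi / 2) s < ε' := by
    have := Metric.dense_iff.mp hdense (Real.pi / 2) ε' hε'0
    rcases this with ⟨s, hs1, hs2⟩
    exact ⟨s, hs2, Metric.mem_ball'.mp hs1⟩
  obtain ⟨a, b, hab⟩ := AddSubgroup.mem_closure_pair.mp (SetLike.mem_coe.mp hsS)
  -- |cos (a θ)| < ε'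
  have hcs : Real.cos ((a : ℝ) * θ) = Real.cos s := by
    rw [← hab, zsmul_eq_mul, zsmul_eq_mul, Real.cos_add_int_mul_two_pi]
  have habs : |Real.cos ((a : ℝ) * θ)| < ε' := by
    rw [hcs, ← Real.sin_pi_div_two_sub]
    calc |Real.sin (Real.pi / 2 - s)| ≤ |Real.pi / 2 - s| := Real.abs_sin_le_abs
      _ < ε' := by rwa [Real.dist_eq] at hs
  -- a ≠ 0
  have ha0 : a ≠ 0 := by
    rintro rfl
    simp only [Int.cast_zero, zero_mul, Real.cos_zero, abs_one] at habs
    linarith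
  refine ⟨a.natAbs - 1, ?_⟩
  have h1 : 1 ≤ a.natAbs := Int.natAbs_pos.mpr ha0
  have hcast : ((a.natAbs - 1 : ℕ) : ℝ) + 1 = (a.natAbs : ℝ) := by
    have : 1 ≤ a.natAbs := by
      rcases Int.natAbs_eq a with h | h <;> omega
    push_cast [this]
    ring
  rw [hcast]
  have hna : ((a.natAbs : ℕ) : ℝ) = |(a : ℝ)| := by
    rw [Nat.cast_natAbs]
    simp [Int.cast_abs]
  have : Real.cos ((a.natAbs : ℝ) * θ) = Real.cos ((a : ℝ) * θ) := by
    rw [hna]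
    rcases abs_cases ((a : ℝ)) with ⟨h, _⟩ | ⟨h, _⟩
    · rw [h]
    · rw [h, neg_mul, Real.cos_neg]
  rw [this]
  exact habs.trans_le (min_le_left _ _)

/-- Theorem 2, density claim: if `θ/2π` is irrational, `κ_∞(m) ∈ [0,1)` for all `m`,
`1 - κ_∞(m) = (1-p^{2m+2})cos²((m+1)θ)/(1-p^{2m+2}cos²((m+1)θ)) ≤ cos²((m+1)θ)`,
`|cos((m+1)θ)|` can be made arbitrarily small by choice of `m`, and hence `κ_∞(m)`
can be made arbitrarily close to 1. -/
theorem stmt_6 (p θ : ℝ) (hp : p ∈ Set.Ioo (0 : ℝ) 1)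
    (hirr : Irrational (θ / (2 * Real.pi)))
    (κ : ℕ → ℝ)
    (hκ : ∀ m : ℕ, κ m = Real.sin (((m : ℝ) + 1) * θ) ^ 2 /
        (1 - p ^ (2 * m + 2) * Real.cos (((m : ℝ) + 1) * θ) ^ 2)) :
    (∀ m : ℕ, κ m ∈ Set.Ico (0 : ℝ) 1) ∧
    (∀ m : ℕ,
      1 - κ m = (1 - p ^ (2 * m + 2)) * Real.cos (((m : ℝ) + 1) * θ) ^ 2 /
          (1 - p ^ (2 * m + 2) * Real.cos (((m : ℝ) + 1) * θ) ^ 2) ∧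
      1 - κ m ≤ Real.cos (((m : ℝ) + 1) * θ) ^ 2) ∧
    (∀ ε : ℝ, 0 < ε → ∃ m : ℕ, |Real.cos (((m : ℝ) + 1) * θ)| < ε) ∧
    (∀ ε : ℝ, 0 < ε → ∃ m : ℕ, 1 - κ m < ε) := by
  obtain ⟨hp0, hp1⟩ := hp
  -- basic facts
  have hpk : ∀ m : ℕ, 0 < p ^ (2 * m + 2) ∧ p ^ (2 * m + 2) < 1 := fun m =>
    ⟨pow_pos hp0 _, pow_lt_one₀ hp0.le hp1 (by omega)⟩
  have hcosne : ∀ m : ℕ, Real.cos (((m : ℝ) + 1) * θ) ≠ 0 := by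
    intro m h
    rw [Real.cos_eq_zero_iff] at h
    obtain ⟨k, hk⟩ := h
    apply hirr
    refine ⟨(2 * (k : ℚ) + 1) / (4 * ((m : ℚ) + 1)), ?_⟩
    have hπ : Real.pi ≠ 0 := Real.pi_ne_zero
    have hm1 : ((m : ℝ) + 1) ≠ 0 := by positivity
    push_cast
    field_simp
    field_simp at hk
    linarith [hk]
  have hD : ∀ m : ℕ, 0 < 1 - p ^ (2 * m + 2) * Real.cos (((m : ℝ) + 1) * θ) ^ 2 := by
    intro m
    have h1 := (hpk m).1
    have h2 := (hpk m).2
    nlinarith [Real.cos_sq_le_one (((m : ℝ) + 1) * θ), sq_nonneg (Real.cos (((m : ℝ) + 1) * θ))]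
  have hcos2pos : ∀ m : ℕ, 0 < Real.cos (((m : ℝ) + 1) * θ) ^ 2 := fun m =>
    pow_pos (abs_pos.mpr (hcosne m)) 2 |>.trans_eq (by rw [sq_abs])
  have key : ∀ m : ℕ,
      (1 - κ m = (1 - p ^ (2 * m + 2)) * Real.cos (((m : ℝ) + 1) * θ) ^ 2 /
          (1 - p ^ (2 * m + 2) * Real.cos (((m : ℝ) + 1) * θ) ^ 2)) ∧
      1 - κ m ≤ Real.cos (((m : ℝ) + 1) * θ) ^ 2 := by
    intro m
    have heq : 1 - κ m = (1 - p ^ (2 * m + 2)) * Real.cos (((m : ℝ) + 1) * θ) ^ 2 /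
        (1 - p ^ (2 * m + 2) * Real.cos (((m : ℝ) + 1) * θ) ^ 2) := by
      rw [hκ m]
      have hs := Real.sin_sq_add_cos_sq (((m : ℝ) + 1) * θ)
      have hDne := (hD m).ne'
      field_simp
      nlinarith [hs]
    refine ⟨heq, ?_⟩
    rw [heq, div_le_iff₀ (hD m)]
    have h1 := (hpk m).1
    have h2 := (hpk m).2
    nlinarith [mul_nonneg (mul_nonneg (hcos2pos m).le h1.le)
      (sub_nonneg.mpr (Real.cos_sq_le_one (((m : ℝ) + 1) * θ)))]
  refine ⟨?_, key, ?_, ?_⟩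
  · intro m
    constructor
    · rw [hκ m]
      exact div_nonneg (sq_nonneg _) (hD m).le
    · rw [hκ m, div_lt_one (hD m)]
      have hs := Real.sin_sq_add_cos_sq (((m : ℝ) + 1) * θ)
      have h1 := (hpk m).1
      have h2 := (hpk m).2
      nlinarith [hcos2pos m]
  · intro ε hε
    exact irr_theta_cos_small hirr hε
  · intro ε hε
    obtain ⟨m, hm⟩ := irr_theta_cos_small hirr (Real.sqrt_pos.mpr hε)
    refine ⟨m, ?_⟩
    have hle := (key m).2
    have hsq : Real.cos (((m : ℝ) + 1) * θ) ^ 2 < ε := by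
      have h2 : |Real.cos (((m : ℝ) + 1) * θ)| ^ 2 < Real.sqrt ε ^ 2 :=
        pow_lt_pow_left₀ hm (abs_nonneg _) two_ne_zero
      rwa [sq_abs, Real.sq_sqrt hε.le] at h2
    linarith
end

section
/- Let p ∈ (0,1), let d ≥ 2 be a real number, let m be a natural number, set η := p^{2m+2}, and let θ be a real number. Define I'_c := 4 η² (m+1)² sin²(2(m+1)θ) / ( η + 2(1−η)/d − d η² cos²(2(m+1)θ)/(d η + 2(1−η)) ). Then I'_c ≤ d η² (2m+2)²/(d η + 2(1−η)), with equality if and only if sin(2(m+1)θ) = ±1. -/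
/-- Appendix claim: the classical Fisher information of the three-valued POVM is
bounded by the quantum Fisher information `d η² (2m+2)²/(dη + 2(1-η))`, with
equality iff `sin(2(m+1)θ) = ±1`. -/
theorem stmt_7 (p d θ : ℝ) (m : ℕ) (hp : p ∈ Set.Ioo (0 : ℝ) 1) (hd : 2 ≤ d)
    (η Ic' : ℝ) (hη : η = p ^ (2 * m + 2))
    (hIc' : Ic' = 4 * η ^ 2 * ((m : ℝ) + 1) ^ 2 * Real.sin (2 * ((m : ℝ) + 1) * θ) ^ 2
        / (η + 2 * (1 - η) / d
          - d * η ^ 2 * Real.cos (2 * ((m : ℝ) + 1) * θ) ^ 2 / (d * η + 2 * (1 - η)))) :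
    Ic' ≤ d * η ^ 2 * (2 * (m : ℝ) + 2) ^ 2 / (d * η + 2 * (1 - η)) ∧
    (Ic' = d * η ^ 2 * (2 * (m : ℝ) + 2) ^ 2 / (d * η + 2 * (1 - η)) ↔
      Real.sin (2 * ((m : ℝ) + 1) * θ) = 1 ∨ Real.sin (2 * ((m : ℝ) + 1) * θ) = -1) := by
  set x := Real.sin (2 * ((m : ℝ) + 1) * θ) with hx
  set y := Real.cos (2 * ((m : ℝ) + 1) * θ) with hy
  have hpyth : x ^ 2 + y ^ 2 = 1 := Real.sin_sq_add_cos_sq _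
  clear_value x y
  have hx2 : x ^ 2 = 1 - y ^ 2 := by linarith
  have hη0 : 0 < η := hη ▸ pow_pos hp.1 _
  have hη1 : η < 1 := by
    rw [hη]
    exact pow_lt_one₀ hp.1.le hp.2 (by omega)
  have hd0 : (0 : ℝ) < d := by linarith
  have hA : 0 < d * η + 2 * (1 - η) := by nlinarith
  have hdη : 0 < d * η := mul_pos hd0 hη0
  have hA2 : d ^ 2 * η ^ 2 < (d * η + 2 * (1 - η)) ^ 2 := by nlinarith
  have hy2 : y ^ 2 ≤ 1 := by nlinarith [sq_nonneg x]
  have hDen : η + 2 * (1 - η) / d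
      - d * η ^ 2 * y ^ 2 / (d * η + 2 * (1 - η))
      = ((d * η + 2 * (1 - η)) ^ 2 - d ^ 2 * η ^ 2 * y ^ 2)
        / (d * (d * η + 2 * (1 - η))) := by
    field_simp
  have hNum : 0 < (d * η + 2 * (1 - η)) ^ 2 - d ^ 2 * η ^ 2 * y ^ 2 := by
    have h1 : d ^ 2 * η ^ 2 * y ^ 2 ≤ d ^ 2 * η ^ 2 := by nlinarith [sq_nonneg (d * η)]
    linarith
  have hD : 0 < η + 2 * (1 - η) / d
      - d * η ^ 2 * y ^ 2 / (d * η + 2 * (1 - η)) := by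
    rw [hDen]
    exact div_pos hNum (by positivity)
  have hM : (0 : ℝ) < (m : ℝ) + 1 := by positivity
  have key : d * η ^ 2 * (2 * (m : ℝ) + 2) ^ 2 / (d * η + 2 * (1 - η)) - Ic'
      = 4 * d * η ^ 2 * ((m : ℝ) + 1) ^ 2 * y ^ 2
        * ((d * η + 2 * (1 - η)) ^ 2 - d ^ 2 * η ^ 2)
        / ((d * η + 2 * (1 - η))
            * ((d * η + 2 * (1 - η)) ^ 2 - d ^ 2 * η ^ 2 * y ^ 2)) := by
    rw [hIc', hx2, hDen]
    field_simp
    ring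
  have hfracpos : 0 < (d * η + 2 * (1 - η))
      * ((d * η + 2 * (1 - η)) ^ 2 - d ^ 2 * η ^ 2 * y ^ 2) := mul_pos hA hNum
  constructor
  · have : 0 ≤ 4 * d * η ^ 2 * ((m : ℝ) + 1) ^ 2 * y ^ 2
        * ((d * η + 2 * (1 - η)) ^ 2 - d ^ 2 * η ^ 2)
        / ((d * η + 2 * (1 - η))
            * ((d * η + 2 * (1 - η)) ^ 2 - d ^ 2 * η ^ 2 * y ^ 2)) := by
      apply div_nonneg _ hfracpos.le
      have h1 : (0:ℝ) ≤ (d * η + 2 * (1 - η)) ^ 2 - d ^ 2 * η ^ 2 := by nlinarith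
      positivity
    linarith
  · constructor
    · intro heq
      have h0 : 4 * d * η ^ 2 * ((m : ℝ) + 1) ^ 2 * y ^ 2
          * ((d * η + 2 * (1 - η)) ^ 2 - d ^ 2 * η ^ 2) = 0 := by
        have := key
        rw [heq] at this
        simp at this
        rcases div_eq_zero_iff.mp this.symm with h | h
        · exact h
        · exact absurd h hfracpos.ne'
      have hy0 : y ^ 2 = 0 := by
        have h1 : (0:ℝ) < (d * η + 2 * (1 - η)) ^ 2 - d ^ 2 * η ^ 2 := by nlinarith
        have h2 : (0:ℝ) < 4 * d * η ^ 2 * ((m : ℝ) + 1) ^ 2 := by positivity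
        rcases mul_eq_zero.mp h0 with h | h
        · rcases mul_eq_zero.mp h with h | h
          · exact absurd h h2.ne'
          · exact h
        · exact absurd h h1.ne'
      have hx1 : (x - 1) * (x + 1) = 0 := by linear_combination hpyth - hy0
      rcases mul_eq_zero.mp hx1 with h | h
      · left; linarith only [h]
      · right; linarith only [h]
    · intro h
      have hx21 : x ^ 2 = 1 := by rcases h with h | h <;> rw [h] <;> norm_num
      have hy0 : y ^ 2 = 0 := by linarith only [hpyth, hx21]
      have : d * η ^ 2 * (2 * (m : ℝ) + 2) ^ 2 / (d * η + 2 * (1 - η)) - Ic' = 0 := by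
        rw [key, hy0]; simp
      linarith only [this]
end

section
/- Let p ∈ (0,1), let d > 2 be a real number, let m be a natural number, set q := p^{2m+1}, and let θ be a real number. Define P := 1/2 − (q/2) cos((2m+1)θ) and I_c^{odd} := (2m+1)² q² sin²((2m+1)θ)/(4 P (1−P)). Then I_c^{odd} ≤ (2m+1)² q², and furthermore (2m+1)² q² < (2m+1)² q² / (2/d + (1 − 2/d) q), the latter quantity being the quantum Fisher information I_q(2m+1). Hence I_c^{odd} is strictly smaller than I_q(2m+1). -/
/-- Appendix claim: the classical Fisher information of the two-valued "odd" POVM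
is at most `(2m+1)² q²`, which is strictly smaller than the quantum Fisher
information `(2m+1)² q²/(2/d + (1-2/d)q)` for `d > 2`; hence
`I_c^{odd} < I_q(2m+1)`. -/
theorem stmt_8 (p d θ : ℝ) (m : ℕ) (hp : p ∈ Set.Ioo (0 : ℝ) 1) (hd : 2 < d)
    (q P Ic : ℝ) (hq : q = p ^ (2 * m + 1))
    (hP : P = 1 / 2 - q / 2 * Real.cos ((2 * (m : ℝ) + 1) * θ))
    (hIc : Ic = (2 * (m : ℝ) + 1) ^ 2 * q ^ 2 * Real.sin ((2 * (m : ℝ) + 1) * θ) ^ 2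
        / (4 * P * (1 - P))) :
    Ic ≤ (2 * (m : ℝ) + 1) ^ 2 * q ^ 2 ∧
    (2 * (m : ℝ) + 1) ^ 2 * q ^ 2
      < (2 * (m : ℝ) + 1) ^ 2 * q ^ 2 / (2 / d + (1 - 2 / d) * q) ∧
    Ic < (2 * (m : ℝ) + 1) ^ 2 * q ^ 2 / (2 / d + (1 - 2 / d) * q) := by
  obtain ⟨hp0, hp1⟩ := hp
  have hq0 : 0 < q := hq ▸ pow_pos hp0 _
  have hq1 : q < 1 := hq ▸ pow_lt_one₀ hp0.le hp1 (by omega)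
  set A := (2 * (m : ℝ) + 1) ^ 2 with hA_def
  have hA : 0 < A := by positivity
  set c := Real.cos ((2 * (m : ℝ) + 1) * θ)
  set s := Real.sin ((2 * (m : ℝ) + 1) * θ)
  have hsc : s ^ 2 + c ^ 2 = 1 := Real.sin_sq_add_cos_sq _
  have hc1 : c ^ 2 ≤ 1 := by nlinarith [sq_nonneg s]
  have hden : 4 * P * (1 - P) = 1 - q ^ 2 * c ^ 2 := by rw [hP]; ring
  have hdpos : 0 < 1 - q ^ 2 * c ^ 2 := by nlinarith
  have h1 : Ic ≤ A * q ^ 2 := by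
    have hs2 : s ^ 2 = 1 - c ^ 2 := by linarith
    have hq2 : (0:ℝ) ≤ 1 - q ^ 2 := by nlinarith
    rw [hIc, hden, div_le_iff₀ hdpos, hs2]
    nlinarith [mul_nonneg (mul_nonneg hA.le (sq_nonneg (q * c))) hq2]
  have hD : 0 < 2 / d + (1 - 2 / d) * q := by
    have h2d : 2 / d < 1 := (div_lt_one (by linarith)).2 hd
    have h2d0 : 0 < 2 / d := by positivity
    nlinarith
  have hD1 : 2 / d + (1 - 2 / d) * q < 1 := by
    have h2d : 2 / d < 1 := (div_lt_one (by linarith)).2 hd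
    have h2d0 : 0 < 2 / d := by positivity
    nlinarith
  have h2 : A * q ^ 2 < A * q ^ 2 / (2 / d + (1 - 2 / d) * q) := by
    rw [lt_div_iff₀ hD]
    nlinarith [mul_pos hA (pow_pos hq0 2)]
  exact ⟨h1, h2, lt_of_le_of_lt h1 h2⟩
end

section
/- Let H be a complex inner product space, let O : H → H be a self-adjoint linear map with O ∘ O = id, let a ∈ H be a unit vector with μ := ⟨a, O a⟩ satisfying |μ| < 1, write μ = cos(θ*) with θ* ∈ (0,π), and let Q := (2|a⟩⟨a| − id) ∘ O. Then for every natural number m, the mean value of O in the amplitude-amplified state Q^m a equals cos((2m+1)θ*): that is, ⟨Q^m a, O (Q^m a)⟩ = cos((2m+1) θ*). -/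
/-!
Write `u = Q^m a` and track the three numbers `⟪a, u⟫`, `⟪a, O u⟫` and `⟪u, O u⟫`. Using
`O² = 1`, self-adjointness and `‖a‖ = 1`, one step of `Q` maps them to
`⟪a, O u⟫`, `2μ⟪a, O u⟫ - ⟪a, u⟫` and `⟪u, O u⟫ + 4|y|²μ - 4 Re(ȳ x)`, where
`x = ⟪a, u⟫`, `y = ⟪a, O u⟫`. With `μ = cos θ` the first two are the cosine recurrence, so
`⟪a, u⟫ = cos(mθ)` and `⟪a, O u⟫ = cos((m+1)θ)`, and then the third telescopes to
`cos((2m+1)θ)`.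
-/

open scoped InnerProductSpace ComplexConjugate

theorem Real.cos_nat_add_two_mul (n : ℕ) (θ : ℝ) :
    Real.cos ((n + 2 : ℕ) * θ) = 2 * Real.cos θ * Real.cos ((n + 1 : ℕ) * θ)
      - Real.cos (n * θ) := by
  have h₁ : ((n + 2 : ℕ) : ℝ) * θ = (n + 1 : ℕ) * θ + θ := by push_cast; ring
  have h₂ : (n : ℝ) * θ = (n + 1 : ℕ) * θ - θ := by push_cast; ring
  rw [h₁, h₂, Real.cos_add, Real.cos_sub]
  ring

theorem Real.cos_two_mul_succ_add_one_mul (m : ℕ) (θ : ℝ) :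
    Real.cos ((2 * (m + 1 : ℕ) + 1) * θ) = Real.cos ((2 * m + 1) * θ)
      + 4 * Real.cos ((m + 1 : ℕ) * θ)
        * (Real.cos θ * Real.cos ((m + 1 : ℕ) * θ) - Real.cos (m * θ)) := by
  set A := ((m + 1 : ℕ) : ℝ) * θ
  have h₁ : (2 * ((m + 1 : ℕ) : ℝ) + 1) * θ = 2 * A + θ := by ring
  have h₂ : (2 * (m : ℝ) + 1) * θ = 2 * A - θ := by simp only [A]; push_cast; ring
  have h₃ : (m : ℝ) * θ = A - θ := by simp only [A]; push_cast; ring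
  rw [h₁, h₂, h₃, Real.cos_add, Real.cos_sub, Real.cos_sub, Real.cos_two_mul, Real.sin_two_mul]
  ring

namespace AmplitudeAmplification

variable {H : Type*} [NormedAddCommGroup H] [InnerProductSpace ℂ H]
  {O : H →ₗ[ℂ] H} {a : H} {Q : H → H}

theorem inner_apply (ha : ‖a‖ = 1) (hQ : ∀ u, Q u = (2 * ⟪a, O u⟫_ℂ) • a - O u) (u : H) :
    ⟪a, Q u⟫_ℂ = ⟪a, O u⟫_ℂ := by
  rw [hQ, inner_sub_right, inner_smul_right, inner_self_eq_one_of_norm_eq_one ha]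
  ring

theorem inner_observable_apply (hO2 : ∀ x, O (O x) = x)
    (hQ : ∀ u, Q u = (2 * ⟪a, O u⟫_ℂ) • a - O u) (u : H) :
    ⟪a, O (Q u)⟫_ℂ = 2 * ⟪a, O a⟫_ℂ * ⟪a, O u⟫_ℂ - ⟪a, u⟫_ℂ := by
  rw [hQ, map_sub, map_smul, hO2, inner_sub_right, inner_smul_right]
  ring

theorem inner_apply_observable_apply (hsa : ∀ x y, ⟪O x, y⟫_ℂ = ⟪x, O y⟫_ℂ)
    (hO2 : ∀ x, O (O x) = x) (hQ : ∀ u, Q u = (2 * ⟪a, O u⟫_ℂ) • a - O u) (u : H) :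
    ⟪Q u, O (Q u)⟫_ℂ = ⟪u, O u⟫_ℂ + 4 * conj ⟪a, O u⟫_ℂ * ⟪a, O u⟫_ℂ * ⟪a, O a⟫_ℂ
      - 2 * (conj ⟪a, O u⟫_ℂ * ⟪a, u⟫_ℂ + ⟪a, O u⟫_ℂ * conj ⟪a, u⟫_ℂ) := by
  have hOuOa : ⟪O u, O a⟫_ℂ = conj ⟪a, u⟫_ℂ := by rw [hsa, hO2, inner_conj_symm]
  rw [hQ, map_sub, map_smul, hO2]
  simp only [inner_sub_left, inner_sub_right, inner_smul_left, inner_smul_right, hOuOa, hsa u,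
    map_mul, map_ofNat]
  ring

theorem inner_iterate_eq_cos (hsa : ∀ x y, ⟪O x, y⟫_ℂ = ⟪x, O y⟫_ℂ) (hO2 : ∀ x, O (O x) = x)
    (ha : ‖a‖ = 1) {θ : ℝ} (hθ : ⟪a, O a⟫_ℂ = Real.cos θ)
    (hQ : ∀ u, Q u = (2 * ⟪a, O u⟫_ℂ) • a - O u) (m : ℕ) :
    ⟪a, Q^[m] a⟫_ℂ = Real.cos (m * θ) ∧ ⟪a, O (Q^[m] a)⟫_ℂ = Real.cos ((m + 1 : ℕ) * θ) ∧
      ⟪Q^[m] a, O (Q^[m] a)⟫_ℂ = Real.cos ((2 * m + 1) * θ) := by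
  induction m with
  | zero => simp [ha, hθ]
  | succ m ih =>
    obtain ⟨hx, hy, hc⟩ := ih
    rw [Function.iterate_succ_apply', inner_apply ha hQ, inner_observable_apply hO2 hQ,
      inner_apply_observable_apply hsa hO2 hQ, hx, hy, hc, hθ, Real.cos_nat_add_two_mul,
      Real.cos_two_mul_succ_add_one_mul]
    refine ⟨rfl, by push_cast; ring, ?_⟩
    rw [Complex.conj_ofReal, Complex.conj_ofReal]
    push_cast
    ring

end AmplitudeAmplification

theorem stmt_13_general (H : Type*) [NormedAddCommGroup H] [InnerProductSpace ℂ H]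
    (O : H →ₗ[ℂ] H)
    (hsa : ∀ x y : H, (inner ℂ (O x) y : ℂ) = inner ℂ x (O y))
    (hO2 : ∀ x : H, O (O x) = x)
    (a : H) (ha : ‖a‖ = 1)
    (μ : ℝ) (hμ : (inner ℂ a (O a) : ℂ) = (μ : ℂ))
    (θs : ℝ) (hcosθ : Real.cos θs = μ)
    (Q : H → H)
    (hQ : ∀ u : H, Q u = (2 * (inner ℂ a (O u) : ℂ)) • a - O u) :
    ∀ m : ℕ, (inner ℂ (Q^[m] a) (O (Q^[m] a)) : ℂ)
      = ((Real.cos ((2 * (m : ℝ) + 1) * θs) : ℝ) : ℂ) := fun m =>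
  (AmplitudeAmplification.inner_iterate_eq_cos hsa hO2 ha (by rw [hμ, hcosθ]) hQ m).2.2

/-- Mean value of the observable `O` in the amplitude-amplified state `Q^m a`:
`⟨Q^m a, O(Q^m a)⟩ = cos((2m+1)θ*)`, where `Q = (2|a⟩⟨a| - I) ∘ O` and
`cos θ* = μ = ⟨a, O a⟩`. -/
theorem stmt_13 (H : Type*) [NormedAddCommGroup H] [InnerProductSpace ℂ H]
    (O : H →ₗ[ℂ] H)
    (hsa : ∀ x y : H, (inner ℂ (O x) y : ℂ) = inner ℂ x (O y))
    (hO2 : ∀ x : H, O (O x) = x)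
    (a : H) (ha : ‖a‖ = 1)
    (μ : ℝ) (hμ : (inner ℂ a (O a) : ℂ) = (μ : ℂ)) (hμlt : |μ| < 1)
    (θs : ℝ) (hθs : θs ∈ Set.Ioo 0 Real.pi) (hcosθ : Real.cos θs = μ)
    (Q : H → H)
    (hQ : ∀ u : H, Q u = (2 * (inner ℂ a (O u) : ℂ)) • a - O u) :
    ∀ m : ℕ, (inner ℂ (Q^[m] a) (O (Q^[m] a)) : ℂ)
      = ((Real.cos ((2 * (m : ℝ) + 1) * θs) : ℝ) : ℂ) :=
  stmt_13_general H O hsa hO2 a ha μ hμ θs hcosθ Q hQ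
end

section
/- Let p ∈ (0,1), d ≥ 2, and θ* ∈ (0,π). Let M ≥ 1, let α₁ = 1, and let α₂, …, α_M be positive integers with sin(α_m θ*) ≠ 0 for every m. Define for each positive integer α the success probability P_α(θ) := 1/2 − (p^{α}/2) cos(α θ) if α is odd, and P_α(θ) := (d−1)/d + p^{α}(sin²(αθ/2) − (d−1)/d) if α is even. For each N, let Y_N^{(1)}, …, Y_N^{(M)} be independent binomial random variables with Y_N^{(m)} ~ Bin(N, P_{α_m}(θ*)). Then for every δ > 0, the probability of the event that the product likelihood θ ↦ ∏_{m=1}^{M} P_{α_m}(θ)^{Y_N^{(m)}} (1 − P_{α_m}(θ))^{N − Y_N^{(m)}} attains a unique global maximum over (0,π) at a point θ̂ satisfying |θ̂ − θ*| < δ tends to 1 as N → ∞. -/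
open Filter Real

open scoped Classical

/-
Write `logLik f v θ = ∑ₘ (vₘ log fₘ(θ) + (1 - vₘ) log (1 - fₘ(θ)))`; at the empirical
frequencies `v = Y / N` the likelihood is `exp (N · logLik f v θ)`, so both have the same
maximizers. At the true frequencies `v = f(θ*)`, Gibbs' inequality makes `θ*` a strict global
maximum of `logLik f v` on `[0, π]` (strict because `f₁ = 1/2 - (p/2) cos` is injective there),
and the second derivative at `θ*` is `-∑ₘ fₘ'(θ*)² / (fₘ(θ*) (1 - fₘ(θ*)))`, negative because
`f₁'(θ*) = (p/2) sin θ* ≠ 0`. For `v` close to `f(θ*)` the function therefore stays strictly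
concave near `θ*` and uniformly close to its limit elsewhere, hence has a unique maximizer, close
to `θ*`; Chebyshev's inequality for each binomial coordinate puts `Y / N` that close to `f(θ*)`
with probability at least `1 - M / (4 ε² N)`.
-/

open Set Topology

lemma exists_pos_add_le_of_forall_lt {X : Type*} [TopologicalSpace X] {g : X → ℝ} {K U : Set X}
    {c : X} (hK : IsCompact K) (hU : IsOpen U) (hc : c ∈ U) (hg : ContinuousOn g K)
    (hmax : ∀ x ∈ K, x ≠ c → g x < g c) :
    ∃ η > 0, ∀ x ∈ K \ U, g x + η ≤ g c := by
  rcases (K \ U).eq_empty_or_nonempty with hempty | hne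
  · exact ⟨1, one_pos, by simp [hempty]⟩
  obtain ⟨z, hz, hzmax⟩ := (hK.diff hU).exists_isMaxOn hne (hg.mono sdiff_subset)
  have hzc : z ≠ c := fun h => hz.2 (h ▸ hc)
  refine ⟨g c - g z, sub_pos.2 (hmax z hz.1 hzc), fun x hx => ?_⟩
  linarith [isMaxOn_iff.1 hzmax x hx]

lemma exists_isStrictMax_of_strictConcaveOn {g : ℝ → ℝ} {S : Set ℝ} {c r : ℝ} (hr : 0 < r)
    (hJS : Icc (c - r) (c + r) ⊆ S) (hg : ContinuousOn g (Icc (c - r) (c + r)))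
    (hconc : StrictConcaveOn ℝ (Icc (c - r) (c + r)) g)
    (hout : ∀ x ∈ S \ Ioo (c - r) (c + r), g x < g c) :
    ∃ x₀ ∈ Ioo (c - r) (c + r), ∀ x ∈ S, x ≠ x₀ → g x < g x₀ := by
  have hcJ : c ∈ Icc (c - r) (c + r) := ⟨by linarith, by linarith⟩
  obtain ⟨x₀, hx₀J, hx₀max⟩ := isCompact_Icc.exists_isMaxOn ⟨c, hcJ⟩ hg
  have hx₀ : x₀ ∈ Ioo (c - r) (c + r) := by
    by_contra h
    exact (hout x₀ ⟨hJS hx₀J, h⟩).not_ge (hx₀max hcJ)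
  refine ⟨x₀, hx₀, fun x hxS hne => ?_⟩
  by_cases hx : x ∈ Ioo (c - r) (c + r)
  · refine (hx₀max (Ioo_subset_Icc_self hx)).lt_of_ne fun heq => hne ?_
    refine hconc.eq_of_isMaxOn (isMaxOn_iff.2 fun y hy => ?_) hx₀max (Ioo_subset_Icc_self hx) hx₀J
    exact heq ▸ isMaxOn_iff.1 hx₀max y hy
  · exact (hout x ⟨hxS, hx⟩).trans_le (hx₀max hcJ)

noncomputable def binLogLik (v t : ℝ) : ℝ := v * log t + (1 - v) * log (1 - t)

noncomputable def binScore (v t : ℝ) : ℝ := v / t - (1 - v) / (1 - t)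

lemma binLogLik_lt_binLogLik_self {q t : ℝ} (hq : q ∈ Ioo 0 1) (ht : t ∈ Ioo 0 1) (hne : t ≠ q) :
    binLogLik q t < binLogLik q q := by
  obtain ⟨hq0, hq1⟩ := hq
  obtain ⟨ht0, ht1⟩ := ht
  have h₁ : log (t / q) < t / q - 1 :=
    log_lt_sub_one_of_pos (by positivity) (by rwa [ne_eq, div_eq_one_iff_eq hq0.ne'])
  have h₂ : log ((1 - t) / (1 - q)) ≤ (1 - t) / (1 - q) - 1 :=
    log_le_sub_one_of_pos (div_pos (by linarith) (by linarith))
  rw [log_div ht0.ne' hq0.ne'] at h₁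
  rw [log_div (by linarith) (by linarith)] at h₂
  have e₁ : q * (t / q - 1) = t - q := by field_simp
  have e₂ : (1 - q) * ((1 - t) / (1 - q) - 1) = q - t := by field_simp [sub_ne_zero.2 hq1.ne']; ring
  unfold binLogLik
  nlinarith [mul_lt_mul_of_pos_left h₁ hq0, mul_le_mul_of_nonneg_left h₂ (sub_nonneg.2 hq1.le)]

lemma binLogLik_le_binLogLik_self {q t : ℝ} (hq : q ∈ Ioo 0 1) (ht : t ∈ Ioo 0 1) :
    binLogLik q t ≤ binLogLik q q := by
  rcases eq_or_ne t q with rfl | hne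
  · rfl
  · exact (binLogLik_lt_binLogLik_self hq ht hne).le

lemma hasDerivAt_binLogLik (v : ℝ) {t : ℝ} (ht : t ∈ Ioo 0 1) :
    HasDerivAt (binLogLik v) (binScore v t) t := by
  have h₁ := ((hasDerivAt_id t).log ht.1.ne').const_mul v
  have h₂ := (((hasDerivAt_id t).const_sub 1).log (sub_ne_zero.2 ht.2.ne')).const_mul (1 - v)
  refine (h₁.add h₂).congr_deriv ?_
  simp only [binScore, id]
  ring

lemma hasDerivAt_binScore (v : ℝ) {t : ℝ} (ht : t ∈ Ioo 0 1) :
    HasDerivAt (binScore v) (-(v / t ^ 2 + (1 - v) / (1 - t) ^ 2)) t := by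
  have h₁ := (hasDerivAt_const t v).div (hasDerivAt_id t) ht.1.ne'
  have h₂ := (hasDerivAt_const t (1 - v)).div ((hasDerivAt_id t).const_sub 1)
    (sub_ne_zero.2 ht.2.ne')
  refine (h₁.sub h₂).congr_deriv ?_
  simp only [id]
  ring

lemma binScore_self {t : ℝ} (ht : t ∈ Ioo 0 1) : binScore t t = 0 := by
  rw [binScore, div_self ht.1.ne', div_self (sub_ne_zero.2 ht.2.ne'), sub_self]

section logLik

variable {ι : Type*} [Fintype ι]

noncomputable def logLik (f : ι → ℝ → ℝ) (v : ι → ℝ) (x : ℝ) : ℝ :=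
  ∑ m, binLogLik (v m) (f m x)

variable {f : ι → ℝ → ℝ}

lemma logLik_lt_logLik_self (hf01 : ∀ m x, f m x ∈ Ioo 0 1) {S : Set ℝ} {m₀ : ι}
    (hinj : InjOn (f m₀) S) {θ₀ x : ℝ} (hθ₀ : θ₀ ∈ S) (hx : x ∈ S) (hne : x ≠ θ₀) :
    logLik f (fun m => f m θ₀) x < logLik f (fun m => f m θ₀) θ₀ :=
  Finset.sum_lt_sum (fun m _ => binLogLik_le_binLogLik_self (hf01 m θ₀) (hf01 m x))
    ⟨m₀, Finset.mem_univ _,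
      binLogLik_lt_binLogLik_self (hf01 _ _) (hf01 _ _) fun h => hne (hinj hx hθ₀ h)⟩

lemma continuous_logLik (hf : ∀ m, Continuous (f m)) (hf01 : ∀ m x, f m x ∈ Ioo 0 1)
    (v : ι → ℝ) : Continuous (logLik f v) :=
  continuous_finsetSum _ fun m _ =>
    (continuous_const.mul ((hf m).log fun x => (hf01 m x).1.ne')).add
      (continuous_const.mul ((continuous_const.sub (hf m)).log
        fun x => sub_ne_zero.2 (hf01 m x).2.ne'))

lemma hasDerivAt_logLik (hf : ∀ m, Differentiable ℝ (f m)) (hf01 : ∀ m x, f m x ∈ Ioo 0 1)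
    (v : ι → ℝ) (x : ℝ) :
    HasDerivAt (logLik f v) (∑ m, binScore (v m) (f m x) * deriv (f m) x) x :=
  HasDerivAt.fun_sum fun m _ =>
    (hasDerivAt_binLogLik (v m) (hf01 m x)).comp x (hf m x).hasDerivAt

lemma iterate_deriv_two_logLik (hf : ∀ m, ContDiff ℝ 2 (f m)) (hf01 : ∀ m x, f m x ∈ Ioo 0 1)
    (v : ι → ℝ) (x : ℝ) :
    deriv^[2] (logLik f v) x = ∑ m, (binScore (v m) (f m x) * deriv (deriv (f m)) x -
      (v m / f m x ^ 2 + (1 - v m) / (1 - f m x) ^ 2) * deriv (f m) x ^ 2) := by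
  have hf₁ : ∀ m, Differentiable ℝ (f m) := fun m => (hf m).differentiable two_ne_zero
  have hf₂ : ∀ m, Differentiable ℝ (deriv (f m)) := fun m =>
    (contDiff_succ_iff_deriv.1 (hf m)).2.2.differentiable one_ne_zero
  have hderiv : deriv (logLik f v) = fun y => ∑ m, binScore (v m) (f m y) * deriv (f m) y :=
    funext fun y => (hasDerivAt_logLik hf₁ hf01 v y).deriv
  rw [Function.iterate_succ_apply, Function.iterate_one, hderiv]
  refine (HasDerivAt.fun_sum fun m _ =>
    (((hasDerivAt_binScore (v m) (hf01 m x)).comp x (hf₁ m x).hasDerivAt).mul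
      (hf₂ m x).hasDerivAt)).deriv.trans (Finset.sum_congr rfl fun m _ => ?_)
  simp only [Function.comp_apply]
  ring

lemma exists_eventually_strictConcaveOn_logLik (hf : ∀ m, ContDiff ℝ 2 (f m))
    (hf01 : ∀ m x, f m x ∈ Ioo 0 1) {θ₀ : ℝ} {m₀ : ι} (hder : deriv (f m₀) θ₀ ≠ 0) :
    ∃ r > 0, ∀ᶠ v in 𝓝 (fun m => f m θ₀),
      StrictConcaveOn ℝ (Icc (θ₀ - r) (θ₀ + r)) (logLik f v) := by
  set D : (ι → ℝ) × ℝ → ℝ := fun z => ∑ m, (binScore (z.1 m) (f m z.2) * deriv (deriv (f m)) z.2 -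
      (z.1 m / f m z.2 ^ 2 + (1 - z.1 m) / (1 - f m z.2) ^ 2) * deriv (f m) z.2 ^ 2)
  have hf₀ : ∀ m, Continuous (f m) := fun m => (hf m).continuous
  have hf₁ : ∀ m, Continuous (deriv (f m)) := fun m => (hf m).continuous_deriv one_le_two
  have hf₂ : ∀ m, Continuous (deriv (deriv (f m))) := fun m =>
    (contDiff_succ_iff_deriv.1 (hf m)).2.2.continuous_deriv le_rfl
  have hne₀ : ∀ m x, f m x ≠ 0 := fun m x => (hf01 m x).1.ne'
  have hne₁ : ∀ m x, 1 - f m x ≠ 0 := fun m x => sub_ne_zero.2 (hf01 m x).2.ne'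
  have hD : Continuous D := by
    simp only [D, binScore]
    fun_prop (disch := simp [hne₀, hne₁])
  have hcurv : ∀ m, 0 < f m θ₀ / f m θ₀ ^ 2 + (1 - f m θ₀) / (1 - f m θ₀) ^ 2 := fun m =>
    add_pos (div_pos (hf01 m θ₀).1 (pow_pos (hf01 m θ₀).1 2))
      (div_pos (sub_pos.2 (hf01 m θ₀).2) (pow_pos (sub_pos.2 (hf01 m θ₀).2) 2))
  have hD₀ : D ((fun m => f m θ₀), θ₀) < 0 := by
    refine Finset.sum_neg' ?_ ⟨m₀, Finset.mem_univ _, ?_⟩ <;>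
      simp only [binScore_self (hf01 _ θ₀), zero_mul, zero_sub]
    · exact fun m _ => neg_nonpos.2 (mul_nonneg (hcurv m).le (sq_nonneg _))
    · exact neg_neg_of_pos (mul_pos (hcurv m₀) (sq_pos_of_ne_zero hder))
  have hev : ∀ᶠ z in 𝓝 ((fun m => f m θ₀), θ₀), D z < 0 :=
    hD.continuousAt.eventually_lt continuousAt_const hD₀
  rw [nhds_prod_eq] at hev
  obtain ⟨pv, hpv, px, hpx, hD_neg⟩ := eventually_prod_iff.1 hev
  obtain ⟨r₀, hr₀, hball⟩ := Metric.eventually_nhds_iff.1 hpx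
  refine ⟨r₀ / 2, half_pos hr₀, hpv.mono fun v hv => ?_⟩
  refine strictConcaveOn_of_deriv2_neg (convex_Icc _ _)
    (continuous_logLik (fun m => (hf m).continuous) hf01 v).continuousOn fun x hx => ?_
  rw [interior_Icc] at hx
  rw [iterate_deriv_two_logLik hf hf01]
  exact hD_neg hv (hball (abs_sub_lt_iff.2 ⟨by linarith [hx.2], by linarith [hx.1]⟩))

lemma eventually_forall_abs_logLik_sub_lt (hf : ∀ m, Continuous (f m))
    (hf01 : ∀ m x, f m x ∈ Ioo 0 1) {K : Set ℝ} (hK : IsCompact K) (w : ι → ℝ) {η : ℝ}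
    (hη : 0 < η) : ∀ᶠ v in 𝓝 w, ∀ x ∈ K, |logLik f v x - logLik f w x| < η := by
  set logit : ι → ℝ → ℝ := fun m x => log (f m x) - log (1 - f m x)
  have hsub : ∀ v x, logLik f v x - logLik f w x = ∑ m, (v m - w m) * logit m x := by
    intro v x
    simp only [logLik, binLogLik, logit, ← Finset.sum_sub_distrib]
    exact Finset.sum_congr rfl fun m _ => by ring
  obtain ⟨C, hC⟩ := hK.exists_bound_of_continuousOn (f := fun x => ∑ m, |logit m x|)
    (continuous_finsetSum _ fun m _ => (((hf m).log fun x => (hf01 m x).1.ne').sub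
      ((continuous_const.sub (hf m)).log fun x => sub_ne_zero.2 (hf01 m x).2.ne')).abs).continuousOn
  filter_upwards [Metric.ball_mem_nhds w (show 0 < η / (|C| + 1) by positivity)] with v hv x hx
  rw [Metric.mem_ball, dist_eq_norm] at hv
  have hlogit : ∑ m, |logit m x| ≤ |C| :=
    (le_abs_self _).trans ((Real.norm_eq_abs _).symm.trans_le (hC x hx) |>.trans (le_abs_self C))
  calc |logLik f v x - logLik f w x|
      ≤ ∑ m, |v m - w m| * |logit m x| := by
        rw [hsub]
        exact (Finset.abs_sum_le_sum_abs _ _).trans_eq (by simp only [abs_mul])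
    _ ≤ ∑ m, ‖v - w‖ * |logit m x| := by
        gcongr with m
        exact norm_le_pi_norm (v - w) m
    _ ≤ ‖v - w‖ * (|C| + 1) := by
        rw [← Finset.mul_sum]
        gcongr
        linarith
    _ < η := by rwa [lt_div_iff₀ (by positivity)] at hv

theorem eventually_exists_isStrictMaxOn_logLik (hf : ∀ m, ContDiff ℝ 2 (f m))
    (hf01 : ∀ m x, f m x ∈ Ioo 0 1) {a b θ₀ : ℝ} (hθ₀ : θ₀ ∈ Ioo a b) {m₀ : ι}
    (hinj : InjOn (f m₀) (Icc a b)) (hder : deriv (f m₀) θ₀ ≠ 0) {δ : ℝ} (hδ : 0 < δ) :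
    ∀ᶠ v in 𝓝 (fun m => f m θ₀), ∃ x₀ ∈ Ioo a b, |x₀ - θ₀| < δ ∧
      ∀ x ∈ Icc a b, x ≠ x₀ → logLik f v x < logLik f v x₀ := by
  have hcont : ∀ m, Continuous (f m) := fun m => (hf m).continuous
  obtain ⟨r₀, hr₀, hconc⟩ := exists_eventually_strictConcaveOn_logLik hf hf01 hder
  obtain ⟨r, hr, hrr₀, hrδ, hra, hrb⟩ :
      ∃ r > 0, r ≤ r₀ ∧ r ≤ δ / 2 ∧ r ≤ (θ₀ - a) / 2 ∧ r ≤ (b - θ₀) / 2 :=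
    ⟨min (min r₀ (δ / 2)) (min ((θ₀ - a) / 2) ((b - θ₀) / 2)),
      lt_min (lt_min hr₀ (by linarith)) (lt_min (by linarith [hθ₀.1]) (by linarith [hθ₀.2])),
      by simp only [min_le_iff, le_refl, true_or, or_true, and_self]⟩
  have hJ : Icc (θ₀ - r) (θ₀ + r) ⊆ Icc a b := Icc_subset_Icc (by linarith) (by linarith)
  obtain ⟨η, hη, hgap⟩ := exists_pos_add_le_of_forall_lt isCompact_Icc isOpen_Ioo
    (show θ₀ ∈ Ioo (θ₀ - r) (θ₀ + r) from ⟨by linarith, by linarith⟩)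
    (continuous_logLik hcont hf01 _).continuousOn
    fun x hx hne => logLik_lt_logLik_self hf01 hinj (Ioo_subset_Icc_self hθ₀) hx hne
  filter_upwards [hconc, eventually_forall_abs_logLik_sub_lt hcont hf01 isCompact_Icc _
    (half_pos hη)] with v hv_conc hv_close
  obtain ⟨x₀, hx₀, hmax⟩ := exists_isStrictMax_of_strictConcaveOn hr hJ
    (continuous_logLik hcont hf01 v).continuousOn
    (hv_conc.subset (Icc_subset_Icc (by linarith) (by linarith)) (convex_Icc _ _))
    fun x hx => by
      have h₁ := abs_lt.1 (hv_close x hx.1)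
      have h₂ := abs_lt.1 (hv_close θ₀ (Ioo_subset_Icc_self hθ₀))
      linarith [hgap x hx]
  exact ⟨x₀, ⟨by linarith [hx₀.1], by linarith [hx₀.2]⟩,
    abs_sub_lt_iff.2 ⟨by linarith [hx₀.2], by linarith [hx₀.1]⟩, hmax⟩

end logLik

open unitInterval in
lemma sum_binomial_far_le {n : ℕ} (hn : n ≠ 0) {x : ℝ} (hx : x ∈ Icc 0 1) {ε : ℝ} (hε : 0 < ε) :
    ∑ k : Fin (n + 1), (if ε ≤ |(k : ℕ) / (n : ℝ) - x| then
      (n.choose k : ℝ) * x ^ (k : ℕ) * (1 - x) ^ (n - k) else 0) ≤ 1 / (4 * ε ^ 2 * n) := by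
  set y : I := ⟨x, hx⟩
  have hvar := bernstein.variance hn y
  have hz : ∀ k : Fin (n + 1), (bernstein.z k : ℝ) = (k : ℕ) / (n : ℝ) := fun k => rfl
  calc ∑ k : Fin (n + 1), (if ε ≤ |(k : ℕ) / (n : ℝ) - x| then
        (n.choose k : ℝ) * x ^ (k : ℕ) * (1 - x) ^ (n - k) else 0)
      ≤ ∑ k : Fin (n + 1), (x - bernstein.z k) ^ 2 * bernstein n k y / ε ^ 2 := by
        gcongr with k
        rw [← show bernstein n k y = (n.choose k : ℝ) * x ^ (k : ℕ) * (1 - x) ^ (n - k) from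
          bernstein_apply n k y, hz]
        split_ifs with hk
        · have hsq : ε ^ 2 ≤ (x - (k : ℕ) / (n : ℝ)) ^ 2 := by
            rw [← sq_abs (x - _), abs_sub_comm]
            gcongr
          rw [le_div_iff₀ (by positivity), mul_comm]
          exact mul_le_mul_of_nonneg_right hsq bernstein_nonneg
        · positivity
    _ = x * (1 - x) / n / ε ^ 2 := by rw [← Finset.sum_div, hvar]
    _ ≤ 1 / (4 * ε ^ 2 * n) := by
        rw [div_div, div_le_div_iff₀ (by positivity) (by positivity)]
        nlinarith [sq_nonneg (x - 1 / 2), sq_nonneg ε,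
          mul_pos (pow_pos hε 2) (Nat.cast_pos.2 (Nat.pos_of_ne_zero hn))]

section product

variable {ι κ : Type*} [Fintype ι] [DecidableEq ι] [Fintype κ]

lemma sum_ite_prod_eq_sum_ite {w : ι → κ → ℝ} (hw : ∀ i, ∑ k, w i k = 1) (i : ι) (C : κ → Prop) :
    ∑ y : ι → κ, (if C (y i) then ∏ j, w j (y j) else 0) = ∑ k, if C k then w i k else 0 := by
  set w' : ι → κ → ℝ := fun j k => if j = i ∧ ¬ C k then 0 else w j k
  have hy : ∀ y : ι → κ, (if C (y i) then ∏ j, w j (y j) else 0) = ∏ j, w' j (y j) := by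
    intro y
    split_ifs with hC
    · exact Finset.prod_congr rfl fun j _ => (if_neg (by rintro ⟨rfl, h⟩; exact h hC)).symm
    · exact (Finset.prod_eq_zero (Finset.mem_univ i) (by simp [w', hC])).symm
  rw [Finset.sum_congr rfl fun y _ => hy y, ← Fintype.prod_sum,
    Finset.prod_eq_single i (fun j _ hj => by simp [w', hj, hw]) (by simp)]
  exact Finset.sum_congr rfl fun k _ => by by_cases hC : C k <;> simp [w', hC]

lemma one_sub_sum_le_sum_ite_prod {w : ι → κ → ℝ} (hw0 : ∀ i k, 0 ≤ w i k)
    (hw : ∀ i, ∑ k, w i k = 1) (bad : ι → κ → Prop) {E : (ι → κ) → Prop}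
    (hE : ∀ y, (∀ i, ¬ bad i (y i)) → E y) :
    1 - ∑ i, ∑ k, (if bad i k then w i k else 0) ≤
      ∑ y : ι → κ, if E y then ∏ i, w i (y i) else 0 := by
  have hprod0 : ∀ y : ι → κ, 0 ≤ ∏ i, w i (y i) := fun y => Finset.prod_nonneg fun i _ => hw0 i _
  have hpoint : ∀ y : ι → κ, ∏ i, w i (y i) ≤
      (if E y then ∏ i, w i (y i) else 0) + ∑ i, if bad i (y i) then ∏ j, w j (y j) else 0 := by
    intro y
    by_cases hEy : E y
    · rw [if_pos hEy, le_add_iff_nonneg_right]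
      exact Finset.sum_nonneg fun i _ => ite_nonneg (hprod0 y) le_rfl
    · obtain ⟨i, hi⟩ : ∃ i, bad i (y i) := not_forall_not.1 fun h => hEy (hE y h)
      rw [if_neg hEy, zero_add]
      refine le_of_eq_of_le (if_pos hi).symm (Finset.single_le_sum (f := fun i =>
        if bad i (y i) then ∏ j, w j (y j) else 0) (fun i _ => ite_nonneg (hprod0 y) le_rfl)
        (Finset.mem_univ i))
  have htotal : ∑ y : ι → κ, ∏ i, w i (y i) = 1 := by
    rw [← Fintype.prod_sum]
    simp [hw]
  have := Finset.sum_le_sum fun y (_ : y ∈ Finset.univ) => hpoint y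
  rw [htotal, Finset.sum_add_distrib, Finset.sum_comm] at this
  simp only [sum_ite_prod_eq_sum_ite hw] at this
  linarith

lemma sum_ite_prod_le_one {w : ι → κ → ℝ} (hw0 : ∀ i k, 0 ≤ w i k)
    (hw : ∀ i, ∑ k, w i k = 1) (E : (ι → κ) → Prop) :
    ∑ y : ι → κ, (if E y then ∏ i, w i (y i) else 0) ≤ 1 := by
  calc ∑ y : ι → κ, (if E y then ∏ i, w i (y i) else 0)
      ≤ ∑ y : ι → κ, ∏ i, w i (y i) := by
        gcongr with y
        split_ifs
        exacts [le_rfl, Finset.prod_nonneg fun i _ => hw0 i _]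
    _ = 1 := by rw [← Fintype.prod_sum]; simp [hw]

end product

section likelihood

variable {ι : Type*} [Fintype ι] {f : ι → ℝ → ℝ}

lemma prod_pow_mul_pow_eq_exp_logLik {x : ℝ} (hf01 : ∀ m, f m x ∈ Ioo 0 1) {N : ℕ}
    (hN : N ≠ 0) {k : ι → ℕ} (hk : ∀ m, k m ≤ N) :
    ∏ m, f m x ^ k m * (1 - f m x) ^ (N - k m) = exp (N * logLik f (fun m => k m / N) x) := by
  rw [logLik, Finset.mul_sum, exp_sum]
  refine Finset.prod_congr rfl fun m _ => ?_
  have hlin : (N : ℝ) * binLogLik (k m / N) (f m x) =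
      k m * log (f m x) + ((N - k m : ℕ) : ℝ) * log (1 - f m x) := by
    rw [binLogLik, Nat.cast_sub (hk m)]
    field_simp
  rw [hlin, exp_add, exp_nat_mul, exp_nat_mul, exp_log (hf01 m).1, exp_log (sub_pos.2 (hf01 m).2)]

lemma exists_isUniqueMax_likelihood_of_logLik (hf01 : ∀ m x, f m x ∈ Ioo 0 1) {N : ℕ}
    (hN : N ≠ 0) (y : ι → Fin (N + 1)) {a b θ₀ δ x₀ : ℝ} (hx₀ : x₀ ∈ Ioo a b)
    (hx₀δ : |x₀ - θ₀| < δ) (hmax : ∀ x ∈ Icc a b, x ≠ x₀ →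
      logLik f (fun m => (y m : ℕ) / N) x < logLik f (fun m => (y m : ℕ) / N) x₀) :
    ∃ θhat ∈ Ioo a b,
      (∀ θ ∈ Ioo a b, ∏ m, f m θ ^ (y m : ℕ) * (1 - f m θ) ^ (N - (y m : ℕ)) ≤
        ∏ m, f m θhat ^ (y m : ℕ) * (1 - f m θhat) ^ (N - (y m : ℕ))) ∧
      (∀ θ' ∈ Ioo a b, ∏ m, f m θ' ^ (y m : ℕ) * (1 - f m θ') ^ (N - (y m : ℕ)) =
        ∏ m, f m θhat ^ (y m : ℕ) * (1 - f m θhat) ^ (N - (y m : ℕ)) → θ' = θhat) ∧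
      |θhat - θ₀| < δ := by
  have hL : ∀ θ, ∏ m, f m θ ^ (y m : ℕ) * (1 - f m θ) ^ (N - (y m : ℕ)) =
      exp (N * logLik f (fun m => (y m : ℕ) / N) θ) := fun θ =>
    prod_pow_mul_pow_eq_exp_logLik (fun m => hf01 m θ) hN fun m => Nat.lt_succ_iff.1 (y m).isLt
  have hexp : StrictMono fun t : ℝ => exp (N * t) :=
    exp_strictMono.comp (strictMono_mul_left_of_pos (by positivity))
  refine ⟨x₀, hx₀, fun θ hθ => ?_, fun θ hθ heq => ?_, hx₀δ⟩
  · rw [hL, hL]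
    refine hexp.monotone ?_
    rcases eq_or_ne θ x₀ with rfl | hne
    · rfl
    · exact (hmax θ (Ioo_subset_Icc_self hθ) hne).le
  · by_contra hne
    rw [hL, hL] at heq
    exact (hexp (hmax θ (Ioo_subset_Icc_self hθ) hne)).ne heq

theorem tendsto_sum_binomial_exists_isUniqueMax_likelihood [DecidableEq ι]
    (hf : ∀ m, ContDiff ℝ 2 (f m)) (hf01 : ∀ m x, f m x ∈ Ioo 0 1) {a b θ₀ : ℝ}
    (hθ₀ : θ₀ ∈ Ioo a b) {m₀ : ι} (hinj : InjOn (f m₀) (Icc a b))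
    (hder : deriv (f m₀) θ₀ ≠ 0) {δ : ℝ} (hδ : 0 < δ) :
    Tendsto (fun N : ℕ => ∑ y : ι → Fin (N + 1),
      if (∃ θhat ∈ Ioo a b,
          (∀ θ ∈ Ioo a b, ∏ m, f m θ ^ (y m : ℕ) * (1 - f m θ) ^ (N - (y m : ℕ)) ≤
            ∏ m, f m θhat ^ (y m : ℕ) * (1 - f m θhat) ^ (N - (y m : ℕ))) ∧
          (∀ θ' ∈ Ioo a b, ∏ m, f m θ' ^ (y m : ℕ) * (1 - f m θ') ^ (N - (y m : ℕ)) =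
            ∏ m, f m θhat ^ (y m : ℕ) * (1 - f m θhat) ^ (N - (y m : ℕ)) → θ' = θhat) ∧
          |θhat - θ₀| < δ)
      then ∏ m, (N.choose (y m : ℕ) : ℝ) * f m θ₀ ^ (y m : ℕ) * (1 - f m θ₀) ^ (N - (y m : ℕ))
      else 0) atTop (𝓝 1) := by
  obtain ⟨ε, hε, hball⟩ := Metric.eventually_nhds_iff.1
    (eventually_exists_isStrictMaxOn_logLik hf hf01 hθ₀ hinj hder hδ)
  have hw0 : ∀ N m (k : Fin (N + 1)),
      0 ≤ (N.choose k : ℝ) * f m θ₀ ^ (k : ℕ) * (1 - f m θ₀) ^ (N - (k : ℕ)) := fun N m k =>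
    mul_nonneg (mul_nonneg (Nat.cast_nonneg _) (pow_nonneg (hf01 m θ₀).1.le _))
      (pow_nonneg (sub_nonneg.2 (hf01 m θ₀).2.le) _)
  have hw1 : ∀ N m, ∑ k : Fin (N + 1),
      (N.choose k : ℝ) * f m θ₀ ^ (k : ℕ) * (1 - f m θ₀) ^ (N - (k : ℕ)) = 1 := fun N m => by
    simpa only [bernstein_apply] using
      bernstein.probability N ⟨f m θ₀, (hf01 m θ₀).1.le, (hf01 m θ₀).2.le⟩
  refine tendsto_of_tendsto_of_tendsto_of_le_of_le' (g := fun N : ℕ =>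
      1 - Fintype.card ι / (4 * ε ^ 2) * (1 / (N : ℝ))) ?_ tendsto_const_nhds ?_
    (Eventually.of_forall fun N => sum_ite_prod_le_one (hw0 N) (hw1 N) _)
  · simpa using (tendsto_one_div_atTop_nhds_zero_nat.const_mul
      (Fintype.card ι / (4 * ε ^ 2))).const_sub (1 : ℝ)
  filter_upwards [eventually_ne_atTop 0] with N hN
  refine le_trans ?_ (one_sub_sum_le_sum_ite_prod (hw0 N) (hw1 N)
    (fun m k => ε ≤ |(k : ℕ) / (N : ℝ) - f m θ₀|) fun y hy => ?_)
  · have hfar := Finset.sum_le_sum fun m (_ : m ∈ Finset.univ) =>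
      sum_binomial_far_le hN (Ioo_subset_Icc_self (hf01 m θ₀)) hε
    rw [Finset.sum_const, Finset.card_univ, nsmul_eq_mul] at hfar
    have hcard : Fintype.card ι / (4 * ε ^ 2) * (1 / (N : ℝ)) =
        Fintype.card ι * (1 / (4 * ε ^ 2 * N)) := by
      field_simp
    linarith
  · obtain ⟨x₀, hx₀, hx₀δ, hmax⟩ := hball ((dist_pi_lt_iff hε).2 fun m => by
      rw [Real.dist_eq]
      exact not_le.1 (hy m))
    exact exists_isUniqueMax_likelihood_of_logLik hf01 hN y hx₀ hx₀δ hmax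

end likelihood

/-- The paper's success probability `P_α(θ)` (odd POVM for odd `α`, even POVM for even `α`). -/
noncomputable def ampProb (p d : ℝ) (a : ℕ) (θ : ℝ) : ℝ :=
  if a % 2 = 1 then 1 / 2 - p ^ a / 2 * cos ((a : ℝ) * θ)
  else (d - 1) / d + p ^ a * (sin ((a : ℝ) * θ / 2) ^ 2 - (d - 1) / d)

section ampProb

variable {p d : ℝ}

lemma ampProb_mem_Ioo (hp : p ∈ Ioo 0 1) (hd : 1 < d) {a : ℕ} (ha : a ≠ 0) (θ : ℝ) :
    ampProb p d a θ ∈ Ioo 0 1 := by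
  have hpa : p ^ a ∈ Ioo 0 1 := ⟨pow_pos hp.1 a, pow_lt_one₀ hp.1.le hp.2 ha⟩
  unfold ampProb
  split_ifs
  · have := neg_one_le_cos ((a : ℝ) * θ)
    have := cos_le_one ((a : ℝ) * θ)
    constructor <;> nlinarith [hpa.1, hpa.2]
  · have hc : (d - 1) / d ∈ Ioo 0 1 :=
      ⟨div_pos (by linarith) (by linarith), (div_lt_one (by linarith)).2 (by linarith)⟩
    have := sin_sq_le_one ((a : ℝ) * θ / 2)
    have := sq_nonneg (sin ((a : ℝ) * θ / 2))
    constructor <;> nlinarith [hpa.1, hpa.2, hc.1, hc.2]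

lemma contDiff_ampProb (p d : ℝ) (a : ℕ) {n : WithTop ℕ∞} : ContDiff ℝ n (ampProb p d a) := by
  unfold ampProb
  split_ifs <;> fun_prop

lemma ampProb_one (p d θ : ℝ) : ampProb p d 1 θ = 1 / 2 - p / 2 * cos θ := by
  simp [ampProb]

lemma injOn_ampProb_one (hp : p ≠ 0) : InjOn (ampProb p d 1) (Icc 0 π) := by
  intro x hx y hy hxy
  simp only [ampProb_one] at hxy
  exact injOn_cos hx hy (mul_left_cancel₀ (div_ne_zero hp two_ne_zero) (by linarith))

lemma hasDerivAt_ampProb_one (p d θ : ℝ) : HasDerivAt (ampProb p d 1) (p / 2 * sin θ) θ := by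
  have h := ((hasDerivAt_cos θ).const_mul (p / 2)).const_sub (1 / 2)
  simp only [mul_neg, neg_neg] at h
  exact h.congr_of_eventuallyEq (Eventually.of_forall fun x => ampProb_one p d x)

end ampProb

theorem stmt_16_general (p d θs : ℝ) (hp : p ∈ Set.Ioo (0 : ℝ) 1) (hd : 2 ≤ d)
    (M : ℕ) (hM : 1 ≤ M) (α : Fin M → ℕ)
    (hα1 : α ⟨0, hM⟩ = 1)
    (hαpos : ∀ m : Fin M, 1 ≤ α m)
    (P : ℕ → ℝ → ℝ)
    (hP : ∀ (a : ℕ) (θ : ℝ), P a θ =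
      if a % 2 = 1 then 1 / 2 - p ^ a / 2 * Real.cos ((a : ℝ) * θ)
      else (d - 1) / d + p ^ a * (Real.sin ((a : ℝ) * θ / 2) ^ 2 - (d - 1) / d))
    (hθs : θs ∈ Set.Ioo 0 Real.pi)
    (δ : ℝ) (hδ : 0 < δ) :
    Tendsto (fun N : ℕ => ∑ y : Fin M → Fin (N + 1),
      if (∃ θhat ∈ Set.Ioo (0 : ℝ) Real.pi,
          (∀ θ ∈ Set.Ioo (0 : ℝ) Real.pi,
            ∏ m, P (α m) θ ^ (y m : ℕ) * (1 - P (α m) θ) ^ (N - (y m : ℕ)) ≤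
              ∏ m, P (α m) θhat ^ (y m : ℕ) * (1 - P (α m) θhat) ^ (N - (y m : ℕ))) ∧
          (∀ θ' ∈ Set.Ioo (0 : ℝ) Real.pi,
            (∏ m, P (α m) θ' ^ (y m : ℕ) * (1 - P (α m) θ') ^ (N - (y m : ℕ))) =
              (∏ m, P (α m) θhat ^ (y m : ℕ) * (1 - P (α m) θhat) ^ (N - (y m : ℕ))) →
              θ' = θhat) ∧
          |θhat - θs| < δ)
      then ∏ m, (N.choose (y m : ℕ) : ℝ) * P (α m) θs ^ (y m : ℕ)
            * (1 - P (α m) θs) ^ (N - (y m : ℕ))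
      else 0)
      atTop (nhds 1) := by
  obtain rfl : P = ampProb p d := funext₂ hP
  have hder : deriv (ampProb p d (α ⟨0, hM⟩)) θs ≠ 0 := by
    rw [hα1, (hasDerivAt_ampProb_one p d θs).deriv]
    exact mul_ne_zero (div_ne_zero hp.1.ne' two_ne_zero) (sin_pos_of_pos_of_lt_pi hθs.1 hθs.2).ne'
  exact tendsto_sum_binomial_exists_isUniqueMax_likelihood (f := fun m => ampProb p d (α m))
    (fun m => contDiff_ampProb p d (α m))
    (fun m => ampProb_mem_Ioo hp (by linarith) (Nat.one_le_iff_ne_zero.1 (hαpos m))) hθs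
    (hα1 ▸ injOn_ampProb_one hp.1.ne') hder hδ

/-- Appendix Lemma 2 (consistency of the joint maximum likelihood estimator):
for independent binomial data `Y^{(m)} ~ Bin(N, P_{α_m}(θ*))` with `α₁ = 1` and
`sin(α_m θ*) ≠ 0` for all `m`, with probability tending to 1 as `N → ∞` the
product likelihood attains a unique global maximum over `(0,π)` at a point
within `δ` of `θ*`. -/
theorem stmt_16 (p d θs : ℝ) (hp : p ∈ Set.Ioo (0 : ℝ) 1) (hd : 2 ≤ d)
    (M : ℕ) (hM : 1 ≤ M) (α : Fin M → ℕ)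
    (hα1 : α ⟨0, hM⟩ = 1)
    (hαpos : ∀ m : Fin M, 1 ≤ α m)
    (hsin : ∀ m : Fin M, Real.sin ((α m : ℝ) * θs) ≠ 0)
    (P : ℕ → ℝ → ℝ)
    (hP : ∀ (a : ℕ) (θ : ℝ), P a θ =
      if a % 2 = 1 then 1 / 2 - p ^ a / 2 * Real.cos ((a : ℝ) * θ)
      else (d - 1) / d + p ^ a * (Real.sin ((a : ℝ) * θ / 2) ^ 2 - (d - 1) / d))
    (hθs : θs ∈ Set.Ioo 0 Real.pi)
    (δ : ℝ) (hδ : 0 < δ) :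
    Tendsto (fun N : ℕ => ∑ y : Fin M → Fin (N + 1),
      if (∃ θhat ∈ Set.Ioo (0 : ℝ) Real.pi,
          (∀ θ ∈ Set.Ioo (0 : ℝ) Real.pi,
            ∏ m, P (α m) θ ^ (y m : ℕ) * (1 - P (α m) θ) ^ (N - (y m : ℕ)) ≤
              ∏ m, P (α m) θhat ^ (y m : ℕ) * (1 - P (α m) θhat) ^ (N - (y m : ℕ))) ∧
          (∀ θ' ∈ Set.Ioo (0 : ℝ) Real.pi,
            (∏ m, P (α m) θ' ^ (y m : ℕ) * (1 - P (α m) θ') ^ (N - (y m : ℕ))) =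
              (∏ m, P (α m) θhat ^ (y m : ℕ) * (1 - P (α m) θhat) ^ (N - (y m : ℕ))) →
              θ' = θhat) ∧
          |θhat - θs| < δ)
      then ∏ m, (N.choose (y m : ℕ) : ℝ) * P (α m) θs ^ (y m : ℕ)
            * (1 - P (α m) θs) ^ (N - (y m : ℕ))
      else 0)
      atTop (nhds 1) :=
  stmt_16_general p d θs hp hd M hM α hα1 hαpos P hP hθs δ hδ
end

section
/- Let p ∈ (0,1), let m be a natural number, set η := p^{2m+2}, and let θ be a real number. For a real parameter d ≥ 2, define P_d := (d−1)/d + η(sin²((m+1)θ) − (d−1)/d) and I_c(d) := (2m+2)² η² sin²((2m+2)θ)/(4 P_d (1 − P_d)). Then, as d → ∞: (i) if cos((m+1)θ) = 0 then I_c(d) = 0 for every d and hence I_c(d) → 0; (ii) if cos((m+1)θ) ≠ 0 then I_c(d) → 4 η (m+1)² sin²((m+1)θ)/(1 − η cos²((m+1)θ)). In case (ii) the limit satisfies the bound 4 η (m+1)² sin²((m+1)θ)/(1 − η cos²((m+1)θ)) ≤ 4 η (m+1)², which is the d → ∞ limit of the quantum Fisher information d (2m+2)² η²/(d η + 2(1−η));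 so the limiting classical Fisher information is discontinuous in θ at the points cos((m+1)θ) = 0, where the bound is attained as a supremum but I_c vanishes. -/
/-!
As `d → ∞` the depolarized outcome probability `P_d` tends to `1 - η cos²((m+1)θ)`, so the
denominator `4 P_d (1 - P_d)` of `I_c(d)` tends to `4 (1 - η c²) η c²`, which is nonzero exactly
when `c = cos((m+1)θ) ≠ 0`; there the limit follows by continuity after writing
`sin((2m+2)θ) = 2 sin((m+1)θ) c`, whereas for `c = 0` the numerator vanishes identically. The bound on the
limit is `sin² x = 1 - cos² x ≤ 1 - η cos² x`, and the quantum Fisher information is a ratio of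
affine functions of `d` with leading coefficients `(2m+2)² η²` and `η`.
-/

open Filter Topology

lemma tendsto_sub_one_div_atTop : Tendsto (fun d : ℝ => (d - 1) / d) atTop (𝓝 1) := by
  have h : Tendsto (fun d : ℝ => 1 - d⁻¹) atTop (𝓝 (1 - 0)) :=
    tendsto_const_nhds.sub tendsto_inv_atTop_zero
  rw [sub_zero] at h
  refine h.congr' ?_
  filter_upwards [eventually_ne_atTop 0] with d hd
  field_simp

lemma tendsto_depolarized_atTop (η a : ℝ) :
    Tendsto (fun d : ℝ => (d - 1) / d + η * (a - (d - 1) / d)) atTop (𝓝 (1 + η * (a - 1))) :=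
  tendsto_sub_one_div_atTop.add
    (tendsto_const_nhds.mul (tendsto_const_nhds.sub tendsto_sub_one_div_atTop))

lemma tendsto_mul_div_mul_add_atTop (a b c : ℝ) (ha : a ≠ 0) :
    Tendsto (fun d : ℝ => d * c / (d * a + b)) atTop (𝓝 (c / a)) := by
  have h : Tendsto (fun d : ℝ => c / (a + b * d⁻¹)) atTop (𝓝 (c / (a + b * 0))) :=
    tendsto_const_nhds.div (tendsto_const_nhds.add (tendsto_const_nhds.mul tendsto_inv_atTop_zero))
      (by simpa using ha)
  rw [mul_zero, add_zero] at h
  refine h.congr' ?_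
  filter_upwards [eventually_ne_atTop 0] with d hd
  rw [← mul_div_mul_left c _ hd, mul_add, mul_comm d a, mul_left_comm, mul_inv_cancel₀ hd, mul_one]

lemma sin_sq_div_one_sub_mul_cos_sq_le_one (x η : ℝ) (hη1 : η ≤ 1) :
    Real.sin x ^ 2 / (1 - η * Real.cos x ^ 2) ≤ 1 := by
  have hc : Real.cos x ^ 2 ≤ 1 := Real.cos_sq_le_one x
  refine div_le_one_of_le₀ ?_ (by nlinarith [sq_nonneg (Real.cos x)])
  nlinarith [Real.sin_sq_add_cos_sq x, sq_nonneg (Real.cos x)]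

lemma Filter.Tendsto.const_div_four_mul_mul_one_sub {α : Type*} {l : Filter α} {P : α → ℝ} {q : ℝ}
    (K : ℝ) (hP : Tendsto P l (𝓝 q)) (hq0 : q ≠ 0) (hq1 : q ≠ 1) :
    Tendsto (fun d => K / (4 * P d * (1 - P d))) l (𝓝 (K / (4 * q * (1 - q)))) :=
  tendsto_const_nhds.div ((tendsto_const_nhds.mul hP).mul (tendsto_const_nhds.sub hP))
    (by simp [hq0, sub_ne_zero.2 hq1.symm])

/-- Appendix C large-dimension analysis of the "even" classical Fisher
information `I_c(d)`: it vanishes identically when `cos((m+1)θ) = 0`; otherwise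
it converges, as `d → ∞`, to `4η(m+1)² sin²((m+1)θ)/(1 - η cos²((m+1)θ))`, which
is bounded by `4η(m+1)²`, the `d → ∞` limit of the quantum Fisher information
`d(2m+2)²η²/(dη + 2(1-η))`. -/
theorem stmt_19 (p θ : ℝ) (m : ℕ) (hp : p ∈ Set.Ioo (0 : ℝ) 1)
    (η : ℝ) (hη : η = p ^ (2 * m + 2))
    (P Ic : ℝ → ℝ)
    (hPd : ∀ d : ℝ, P d = (d - 1) / d + η * (Real.sin (((m : ℝ) + 1) * θ) ^ 2 - (d - 1) / d))
    (hIcd : ∀ d : ℝ, Ic d = (2 * (m : ℝ) + 2) ^ 2 * η ^ 2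
        * Real.sin ((2 * (m : ℝ) + 2) * θ) ^ 2 / (4 * P d * (1 - P d))) :
    (Real.cos (((m : ℝ) + 1) * θ) = 0 →
      (∀ d : ℝ, 2 ≤ d → Ic d = 0) ∧ Tendsto Ic atTop (nhds 0)) ∧
    (Real.cos (((m : ℝ) + 1) * θ) ≠ 0 →
      Tendsto Ic atTop (nhds (4 * η * ((m : ℝ) + 1) ^ 2
        * Real.sin (((m : ℝ) + 1) * θ) ^ 2
        / (1 - η * Real.cos (((m : ℝ) + 1) * θ) ^ 2)))) ∧
    (4 * η * ((m : ℝ) + 1) ^ 2 * Real.sin (((m : ℝ) + 1) * θ) ^ 2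
        / (1 - η * Real.cos (((m : ℝ) + 1) * θ) ^ 2) ≤ 4 * η * ((m : ℝ) + 1) ^ 2) ∧
    Tendsto (fun d : ℝ => d * (2 * (m : ℝ) + 2) ^ 2 * η ^ 2 / (d * η + 2 * (1 - η)))
      atTop (nhds (4 * η * ((m : ℝ) + 1) ^ 2)) := by
  obtain ⟨hp0, hp1⟩ := hp
  have hη0 : 0 < η := hη ▸ pow_pos hp0 _
  have hη1 : η < 1 := hη ▸ pow_lt_one₀ hp0.le hp1 (by omega)
  set x := ((m : ℝ) + 1) * θ
  have hsin2 : Real.sin ((2 * (m : ℝ) + 2) * θ) = 2 * Real.sin x * Real.cos x := by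
    rw [← Real.sin_two_mul]; congr 1; ring
  have hP : Tendsto P atTop (𝓝 (1 - η * Real.cos x ^ 2)) := by
    have hlim : 1 + η * (Real.sin x ^ 2 - 1) = 1 - η * Real.cos x ^ 2 := by
      rw [Real.sin_sq]; ring
    exact hlim ▸ (tendsto_depolarized_atTop η _).congr fun d => (hPd d).symm
  refine ⟨fun hc => ?_, fun hc => ?_, ?_, ?_⟩
  · have hIc : Ic = 0 := funext fun d => by simp [hIcd, hsin2, hc]
    exact ⟨fun d _ => by simp [hIc], hIc ▸ tendsto_const_nhds⟩
  · have hηc : 0 < η * Real.cos x ^ 2 := by positivity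
    have hηc1 : η * Real.cos x ^ 2 < 1 := by nlinarith [Real.cos_sq_le_one x]
    have hne : 1 - η * Real.cos x ^ 2 ≠ 0 := by linarith
    have h := hP.const_div_four_mul_mul_one_sub
      ((2 * (m : ℝ) + 2) ^ 2 * η ^ 2 * Real.sin ((2 * (m : ℝ) + 2) * θ) ^ 2) hne (by linarith)
    rw [← funext hIcd, hsin2, sub_sub_cancel] at h
    convert h using 2
    field_simp; ring
  · rw [mul_div_assoc]
    exact mul_le_of_le_one_right (by positivity)
      (sin_sq_div_one_sub_mul_cos_sq_le_one x η hη1.le)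
  · convert tendsto_mul_div_mul_add_atTop η (2 * (1 - η)) ((2 * (m : ℝ) + 2) ^ 2 * η ^ 2) hη0.ne'
      using 2
    · ring
    · field_simp; ring
end
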